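/- arXiv:1410.6433 — 10 statements merged into one kernel-verified Lean document; each statement's English description precedes it below -/
import Mathlib

section
/- If c < c', c' - c ≤ 2^ℓ, and the palindromic radii at centers c and c' in a word T both satisfy R(c) ≥ 2^ℓ and R(c') ≥ 2^ℓ (where R(c) is the largest r such that T[c..c+r-1] equals the reverse of T[c-r..c-1]), then 2(c'-c) is a period of the fragment T[(c-2^ℓ)..(c'+2^ℓ-1)]. -/
lemma refl_aux {α : Type*} (T : ℤ → α) (m : ℤ) (ℓ : ℕ)
    (h : ∀ i : ℤ, 1 ≤ i → i ≤ 2 ^ ℓ → T (m - i) = T (m + i - 1)) :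
    ∀ x : ℤ, m - 2 ^ ℓ ≤ x → x ≤ m + 2 ^ ℓ - 1 → T x = T (2 * m - 1 - x) := by
  intro x h1 h2
  rcases le_or_gt x (m - 1) with hx | hx
  · have := h (m - x) (by omega) (by omega)
    simpa [show m - (m - x) = x by ring, show m + (m - x) - 1 = 2*m - 1 - x by ring] using this
  · have := h (x - m + 1) (by omega) (by omega)
    rw [show m - (x - m + 1) = 2*m - 1 - x by ring, show m + (x - m + 1) - 1 = x by ring] at this
    exact this.symm

/-- If `c < c'`, `c' - c ≤ 2^ℓ`, and the palindromic radii at centers `c` and `c'`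
are both at least `2^ℓ`, then `2(c'-c)` is a period of `T[(c-2^ℓ)..(c'+2^ℓ-1)]`. -/
theorem stmt0 {α : Type*} (T : ℤ → α) (c c' : ℤ) (ℓ : ℕ)
    (hlt : c < c') (hdist : c' - c ≤ 2 ^ ℓ)
    (hRc : ∀ i : ℤ, 1 ≤ i → i ≤ 2 ^ ℓ → T (c - i) = T (c + i - 1))
    (hRc' : ∀ i : ℤ, 1 ≤ i → i ≤ 2 ^ ℓ → T (c' - i) = T (c' + i - 1)) :
    ∀ x : ℤ, c - 2 ^ ℓ ≤ x → x + 2 * (c' - c) ≤ c' + 2 ^ ℓ - 1 →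
      T x = T (x + 2 * (c' - c)) := by
  intro x h1 h2
  have e1 := refl_aux T c ℓ hRc x h1 (by omega)
  have e2 := refl_aux T c' ℓ hRc' (2 * c - 1 - x) (by omega) (by omega)
  rw [e1, e2]
  congr 1
  ring
end

section
/- Let c < c' < c'' be three centers in a word T with palindromic radii all at least 2^ℓ and c'' - c ≤ 2^ℓ. Suppose 2d divides 2(c'-c) and 2d is a period of T[(c-2^ℓ)..(c'+2^ℓ-1)], and 2d' divides 2(c''-c') and 2d' is a period of T[(c'-2^ℓ)..(c''+2^ℓ-1)]. Then 2·gcd(d,d') is a period of the whole fragment T[(c-2^ℓ)..(c''+2^ℓ-1)]. -/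
private lemma per_steps {α : Type*} (T : ℤ → α) {a b p : ℤ}
    (hper : ∀ x, a ≤ x → x + p ≤ b → T x = T (x + p)) (hp : 0 < p) :
    ∀ (k : ℕ) (x : ℤ), a ≤ x → x + k * p ≤ b → T x = T (x + k * p) := by
  intro k
  induction k with
  | zero => intro x _ _; simp
  | succ n ih =>
    intro x hx hb
    have hkp : (0:ℤ) ≤ (n:ℤ) * p := by positivity
    have hcast : ((n + 1 : ℕ) : ℤ) * p = p + (n:ℤ) * p := by push_cast; ring
    have hb' : x + p ≤ b := by rw [hcast] at hb; linarith
    rw [hper x hx hb']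
    have h2 := ih (x + p) (by linarith) (by rw [hcast] at hb; linarith)
    rw [h2]
    congr 1
    rw [hcast]; ring

private lemma per_congr {α : Type*} (T : ℤ → α) {a b p : ℤ} (hp : 0 < p)
    (hper : ∀ x, a ≤ x → x + p ≤ b → T x = T (x + p))
    {x y : ℤ} (hx : a ≤ x) (hy : a ≤ y) (hxb : x ≤ b) (hyb : y ≤ b)
    (hdvd : p ∣ y - x) : T x = T y := by
  rcases le_total x y with h | h
  · obtain ⟨m, hm⟩ := hdvd
    have hm0 : 0 ≤ m := by nlinarith [hm ▸ sub_nonneg.mpr h]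
    have hmy : y = x + (m.toNat : ℤ) * p := by
      rw [Int.toNat_of_nonneg hm0]; linarith [hm]
    rw [hmy]
    exact per_steps T hper hp m.toNat x hx (by rw [← hmy]; exact hyb)
  · obtain ⟨m, hm⟩ := hdvd
    have hm0 : 0 ≤ -m := by nlinarith [hm ▸ sub_nonpos.mpr h]
    have hmy : x = y + ((-m).toNat : ℤ) * p := by
      rw [Int.toNat_of_nonneg hm0]; linarith [hm]
    rw [hmy]
    exact (per_steps T hper hp (-m).toNat y hy (by rw [← hmy]; exact hxb)).symm

/-- Fine–Wilf for a window `[a, b]`. -/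
private lemma fine_wilf {α : Type*} (T : ℤ → α) :
    ∀ (q : ℕ), ∀ (p : ℕ), 0 < p → 0 < q → p ≤ q → ∀ (a b : ℤ),
    (∀ x, a ≤ x → x + (p:ℤ) ≤ b → T x = T (x + p)) →
    (∀ x, a ≤ x → x + (q:ℤ) ≤ b → T x = T (x + q)) →
    a + p + q ≤ b + 1 →
    ∀ x, a ≤ x → x + (Nat.gcd p q : ℤ) ≤ b → T x = T (x + (Nat.gcd p q : ℤ)) := by
  intro q
  induction q using Nat.strong_induction_on with
  | _ q ih =>
    intro p hp hq hpq a b hperp hperq hlen x hx hxb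
    rcases eq_or_lt_of_le hpq with heq | hlt
    · subst heq
      rw [Nat.gcd_self] at *
      exact hperp x hx hxb
    · -- p < q
      set r : ℕ := q - p with hr
      have hr0 : 0 < r := by omega
      have hrq : r < q := by omega
      have hgcd : Nat.gcd p q = Nat.gcd p r := by
        rw [hr, Nat.gcd_sub_self_right (le_of_lt hlt)]
      -- period r on [a, b - p]
      have hperr : ∀ y, a ≤ y → y + (r:ℤ) ≤ b - p → T y = T (y + r) := by
        intro y hy hyb
        have hq' : (q:ℤ) = r + p := by push_cast; omega
        have h1 : T y = T (y + q) := hperq y hy (by rw [hq']; linarith)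
        have hr0' : (0:ℤ) < r := by exact_mod_cast hr0
        have h2 : T (y + r) = T (y + r + p) := hperp (y + r) (by linarith) (by linarith)
        rw [h1, h2]; congr 1; rw [hq']; ring
      have hperp' : ∀ y, a ≤ y → y + (p:ℤ) ≤ b - p → T y = T (y + p) := by
        intro y hy hyb; exact hperp y hy (by linarith)
      -- apply IH to (min p r, max p r) on [a, b - p]
      have hlen' : a + (min p r : ℕ) + (max p r : ℕ) ≤ (b - p) + 1 := by
        have : (min p r : ℕ) + (max p r : ℕ) = p + r := by omega
        push_cast [this] at *
        omega
      have hmaxlt : max p r < q := by omega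
      have hIH := ih (max p r) hmaxlt (min p r) (by omega) (by omega) (by omega) a (b - p)
        (by rcases le_total p r with h | h
            · simpa [min_eq_left h] using hperp'
            · simpa [min_eq_right h] using hperr)
        (by rcases le_total p r with h | h
            · simpa [max_eq_right h] using hperr
            · simpa [max_eq_left h] using hperp')
        hlen'
      have hgcd2 : Nat.gcd (min p r) (max p r) = Nat.gcd p q := by
        rw [hgcd]
        rcases le_total p r with h | h
        · rw [min_eq_left h, max_eq_right h]
        · rw [min_eq_right h, max_eq_left h, Nat.gcd_comm]
      rw [hgcd2] at hIH
      set g : ℕ := Nat.gcd p q with hgdef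
      have hg0 : 0 < g := Nat.gcd_pos_of_pos_left q hp
      rcases le_or_gt (x + (g:ℤ)) (b - p) with hcase | hcase
      · exact hIH x hx hcase
      · -- x near the right end; step back by p
        have hgq : g ∣ q := Nat.gcd_dvd_right p q
        have hgp : g ∣ p := Nat.gcd_dvd_left p q
        have hgr : g ∣ r := hgcd ▸ Nat.gcd_dvd_right p r
        have hrg : g ≤ r := Nat.le_of_dvd hr0 hgr
        have hqpg : p + g ≤ q := by omega
        have hxa : a + p ≤ x := by push_cast at *; omega
        have e1 : T (x - p) = T x := by
          have := hperp (x - p) (by linarith) (by push_cast at *; omega)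
          rw [this]; congr 1; ring
        have e2 : T (x - p) = T (x - p + g) := hIH (x - p) (by linarith) (by linarith)
        have e3 : T (x - p + g) = T (x + g) := by
          have := hperp (x - p + g) (by linarith) (by linarith)
          rw [this]; congr 1; ring
        rw [← e1, e2, e3]

/-- Propagate a period `g` from a subwindow of length ≥ p + g to the whole window with period `p` (g ∣ p). -/
private lemma per_extend {α : Type*} (T : ℤ → α) {a b a' b' p g : ℤ}
    (hp : 0 < p) (hg : 0 < g) (hdvd : g ∣ p) (haa' : a ≤ a') (hb'b : b' ≤ b)
    (hper : ∀ x, a ≤ x → x + p ≤ b → T x = T (x + p))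
    (hsub : ∀ x, a' ≤ x → x + g ≤ b' → T x = T (x + g))
    (hlen : a' + p + g ≤ b' + 1) :
    ∀ x, a ≤ x → x + g ≤ b → T x = T (x + g) := by
  intro x hx hxb
  set y : ℤ := a' + (x - a') % p with hy
  have hmod1 : 0 ≤ (x - a') % p := Int.emod_nonneg _ (ne_of_gt hp)
  have hmod2 : (x - a') % p < p := Int.emod_lt_of_pos _ hp
  have hya : a' ≤ y := by linarith
  have hyb : y + g ≤ b' := by linarith
  have hdvdxy : p ∣ y - x := by
    have : y - x = -((x - a') - (x - a') % p) := by rw [hy]; ring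
    rw [this]
    exact dvd_neg.mpr (Int.dvd_self_sub_of_emod_eq rfl)
  have e1 : T x = T y :=
    per_congr T hp hper hx (le_trans haa' hya) (by linarith) (by linarith) hdvdxy
  have e2 : T y = T (y + g) := hsub y hya hyb
  have e3 : T (y + g) = T (x + g) := by
    refine per_congr T hp hper (by linarith [le_trans haa' hya]) (by linarith) (by linarith) hxb ?_
    have : (x + g) - (y + g) = -(y - x) := by ring
    rw [this]; exact dvd_neg.mpr hdvdxy
  rw [e1, e2, e3]

/-- Turn a period `d` (possibly negative) into the period `|d|`. -/
private lemma per_abs {α : Type*} (T : ℤ → α) {a b d : ℤ} (hd : d ≠ 0)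
    (hper : ∀ x, a ≤ x → x + d ≤ b → T x = T (x + d)) :
    ∀ x, a ≤ x → x + |d| ≤ b → T x = T (x + |d|) := by
  intro x hx hxb
  rcases abs_choice d with h | h
  · rw [h] at hxb ⊢; exact hper x hx hxb
  · have hd0 : d < 0 := by
      rcases lt_trichotomy d 0 with h' | h' | h'
      · exact h'
      · exact absurd h' hd
      · exfalso; rw [abs_of_pos h'] at h; omega
    rw [h] at hxb ⊢
    have := hper (x - d) (by linarith) (by linarith)
    have e : x - d + d = x := by ring
    rw [e] at this
    have e2 : x + -d = x - d := by ring
    rw [e2, ← this]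

/-- Three centers with radii at least `2^ℓ` within distance `2^ℓ`, with periods `2d`, `2d'`
on the two overlapping fragments, imply period `2·gcd(d,d')` on the whole fragment. -/
theorem stmt1 {α : Type*} (T : ℤ → α) (c c' c'' d d' : ℤ) (ℓ : ℕ)
    (h1 : c < c') (h2 : c' < c'') (h3 : c'' - c ≤ 2 ^ ℓ)
    (hRc : ∀ i : ℤ, 1 ≤ i → i ≤ 2 ^ ℓ → T (c - i) = T (c + i - 1))
    (hRc' : ∀ i : ℤ, 1 ≤ i → i ≤ 2 ^ ℓ → T (c' - i) = T (c' + i - 1))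
    (hRc'' : ∀ i : ℤ, 1 ≤ i → i ≤ 2 ^ ℓ → T (c'' - i) = T (c'' + i - 1))
    (hd : 2 * d ∣ 2 * (c' - c))
    (hper1 : ∀ x : ℤ, c - 2 ^ ℓ ≤ x → x + 2 * d ≤ c' + 2 ^ ℓ - 1 → T x = T (x + 2 * d))
    (hd' : 2 * d' ∣ 2 * (c'' - c'))
    (hper2 : ∀ x : ℤ, c' - 2 ^ ℓ ≤ x → x + 2 * d' ≤ c'' + 2 ^ ℓ - 1 → T x = T (x + 2 * d')) :
    ∀ x : ℤ, c - 2 ^ ℓ ≤ x → x + 2 * (Int.gcd d d' : ℤ) ≤ c'' + 2 ^ ℓ - 1 →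
      T x = T (x + 2 * (Int.gcd d d' : ℤ)) := by
  set L : ℤ := 2 ^ ℓ with hLdef
  have hL0 : 0 < L := by positivity
  have hd0 : d ≠ 0 := by rintro rfl; rw [mul_zero, zero_dvd_iff] at hd; omega
  have hd'0 : d' ≠ 0 := by rintro rfl; rw [mul_zero, zero_dvd_iff] at hd'; omega
  set g : ℤ := (Int.gcd d d' : ℤ) with hgdef
  have hg0 : 0 < g := by
    have h := Int.gcd_pos_of_ne_zero_left d' hd0
    rw [hgdef]; exact_mod_cast h
  set p : ℤ := 2 * |d| with hpdef
  set q : ℤ := 2 * |d'| with hqdef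
  have hp0 : 0 < p := by have := abs_pos.mpr hd0; linarith
  have hq0 : 0 < q := by have := abs_pos.mpr hd'0; linarith
  have habs : |2 * d| = p := by rw [abs_mul, hpdef]; norm_num
  have habs' : |2 * d'| = q := by rw [abs_mul, hqdef]; norm_num
  have hple : p ≤ 2 * (c' - c) := by
    rw [← habs]; exact Int.le_of_dvd (by linarith) ((abs_dvd _ _).mpr hd)
  have hqle : q ≤ 2 * (c'' - c') := by
    rw [← habs']; exact Int.le_of_dvd (by linarith) ((abs_dvd _ _).mpr hd')
  have hgd : g ∣ |d| := by
    rw [Int.abs_eq_natAbs, hgdef]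
    exact_mod_cast Nat.gcd_dvd_left d.natAbs d'.natAbs
  have hgd' : g ∣ |d'| := by
    rw [Int.abs_eq_natAbs, hgdef]
    exact_mod_cast Nat.gcd_dvd_right d.natAbs d'.natAbs
  have hgp : 2 * g ∣ p := mul_dvd_mul_left 2 hgd
  have hgq : 2 * g ∣ q := mul_dvd_mul_left 2 hgd'
  have hgple : 2 * g ≤ p := Int.le_of_dvd hp0 hgp
  have hgqle : 2 * g ≤ q := Int.le_of_dvd hq0 hgq
  -- periods with positive shifts
  have hP1 : ∀ x, c - L ≤ x → x + p ≤ c' + L - 1 → T x = T (x + p) := by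
    have := per_abs T (a := c - L) (b := c' + L - 1) (d := 2 * d) (by simpa using hd0) hper1
    rwa [habs] at this
  have hP2 : ∀ x, c' - L ≤ x → x + q ≤ c'' + L - 1 → T x = T (x + q) := by
    have := per_abs T (a := c' - L) (b := c'' + L - 1) (d := 2 * d') (by simpa using hd'0) hper2
    rwa [habs'] at this
  -- natural-number versions for Fine–Wilf
  set pn : ℕ := 2 * d.natAbs with hpn
  set qn : ℕ := 2 * d'.natAbs with hqn
  have hpnc : (pn : ℤ) = p := by rw [hpn, hpdef, Int.abs_eq_natAbs]; push_cast; ring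
  have hqnc : (qn : ℤ) = q := by rw [hqn, hqdef, Int.abs_eq_natAbs]; push_cast; ring
  have hpn0 : 0 < pn := by omega
  have hqn0 : 0 < qn := by omega
  have hgcdc : (Nat.gcd pn qn : ℤ) = 2 * g := by
    rw [hpn, hqn, Nat.gcd_mul_left, hgdef, Int.gcd]
    push_cast; ring
  -- restrict periods to the overlap window [c' - L, c' + L - 1]
  have hO1 : ∀ x, c' - L ≤ x → x + (pn : ℤ) ≤ c' + L - 1 → T x = T (x + pn) := by
    intro x h1' h2'; rw [hpnc] at h2' ⊢; exact hP1 x (by linarith) h2'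
  have hO2 : ∀ x, c' - L ≤ x → x + (qn : ℤ) ≤ c' + L - 1 → T x = T (x + qn) := by
    intro x h1' h2'; rw [hqnc] at h2' ⊢; exact hP2 x h1' (by linarith)
  have hlenO : (c' - L) + (pn : ℤ) + (qn : ℤ) ≤ (c' + L - 1) + 1 := by
    rw [hpnc, hqnc]; linarith
  have hOv : ∀ x, c' - L ≤ x → x + 2 * g ≤ c' + L - 1 → T x = T (x + 2 * g) := by
    rcases le_total pn qn with h | h
    · have := fine_wilf T qn pn hpn0 hqn0 h (c' - L) (c' + L - 1) hO1 hO2 hlenO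
      rwa [hgcdc] at this
    · have := fine_wilf T pn qn hqn0 hpn0 h (c' - L) (c' + L - 1) hO2 hO1
        (by linarith) 
      rw [Nat.gcd_comm, hgcdc] at this
      exact this
  -- extend to the left fragment
  have hLft : ∀ x, c - L ≤ x → x + 2 * g ≤ c' + L - 1 → T x = T (x + 2 * g) :=
    per_extend T (a' := c' - L) (b' := c' + L - 1) hp0 (by linarith) hgp
      (by linarith) le_rfl hP1 hOv (by linarith)
  -- extend to the right fragment
  have hRgt : ∀ x, c' - L ≤ x → x + 2 * g ≤ c'' + L - 1 → T x = T (x + 2 * g) :=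
    per_extend T (a' := c' - L) (b' := c' + L - 1) hq0 (by linarith) hgq
      le_rfl (by linarith) hP2 hOv (by linarith)
  -- combine
  intro x hx hxb
  rcases le_or_gt (x + 2 * g) (c' + L - 1) with hcase | hcase
  · exact hLft x hx hcase
  · exact hRgt x (by linarith) hxb
end

section
/- If a word w is such that some power w^k (with k ≥ 2) is a palindrome, then w itself is a palindrome. -/
/-! Reversal turns `w ^ k` into `(w.reverse) ^ k`, so if `w ^ k` is a palindrome then `w.reverse`
and `w` are prefixes of the same length of one word. -/

namespace List

variable {α : Type*}

theorem reverse_flatten_replicate (w : List α) (k : ℕ) :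
    (replicate k w).flatten.reverse = (replicate k w.reverse).flatten := by
  simp only [reverse_flatten, map_replicate, reverse_replicate]

theorem eq_of_flatten_replicate_eq {u v : List α} {k : ℕ} (hk : k ≠ 0)
    (hlen : u.length = v.length) (h : (replicate k u).flatten = (replicate k v).flatten) :
    u = v := by
  obtain ⟨m, rfl⟩ := Nat.exists_eq_succ_of_ne_zero hk
  rw [replicate_succ, replicate_succ, flatten_cons, flatten_cons] at h
  exact (append_inj h hlen).1

end List

/-- If some power `w^k` (with `k ≥ 2`) is a palindrome, then `w` itself is a palindrome. -/
theorem stmt2 {α : Type*} (w : List α) (k : ℕ) (hk : 2 ≤ k)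
    (hpal : (List.replicate k w).flatten.reverse = (List.replicate k w).flatten) :
    w.reverse = w :=
  List.eq_of_flatten_replicate_eq (Nat.ne_zero_of_lt hk) List.length_reverse
    (by rw [← List.reverse_flatten_replicate, hpal])
end

section
/- Given m ≥ 5 centers c_1 < c_2 < ... < c_m lying inside a segment of length 2^ℓ of a word T such that the palindromic radius at each c_i is at least 2^ℓ, the quantity p = 2·gcd(c_2 - c_1, c_3 - c_2, ..., c_m - c_{m-1}) satisfies p ≤ (1/2)·2^ℓ and p is a period of T[(c_1 - 2^ℓ)..(c_m + 2^ℓ - 1)]. -/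
namespace Stmt3Aux

variable {α : Type*}

/-- `T` has period `p` on positions `[a, b]`. -/
def HasPeriod (T : ℤ → α) (a b p : ℤ) : Prop :=
  ∀ x, a ≤ x → x + p ≤ b → T x = T (x + p)

lemma HasPeriod.mono {T : ℤ → α} {a b a' b' p : ℤ} (h : HasPeriod T a b p)
    (ha : a ≤ a') (hb : b' ≤ b) : HasPeriod T a' b' p :=
  fun x hx hx' => h x (ha.trans hx) (hx'.trans hb)

lemma two_centers {T : ℤ → α} {L a b : ℤ}
    (hra : ∀ t : ℤ, 1 ≤ t → t ≤ L → T (a - t) = T (a + t - 1))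
    (hrb : ∀ t : ℤ, 1 ≤ t → t ≤ L → T (b - t) = T (b + t - 1))
    (hab : a ≤ b) :
    HasPeriod T (a - L) (b + L - 1) (2 * (b - a)) := by
  have refl : ∀ (cc : ℤ), (∀ t : ℤ, 1 ≤ t → t ≤ L → T (cc - t) = T (cc + t - 1)) →
      ∀ x, cc - L ≤ x → x ≤ cc + L - 1 → T x = T (2 * cc - 1 - x) := by
    intro cc hc x h1 h2
    rcases le_or_gt x (cc - 1) with h | h
    · have hh := hc (cc - x) (by omega) (by omega)
      have e1 : cc - (cc - x) = x := by ring
      have e2 : cc + (cc - x) - 1 = 2 * cc - 1 - x := by ring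
      rw [e1, e2] at hh
      exact hh
    · have hh := hc (x - cc + 1) (by omega) (by omega)
      have e1 : cc - (x - cc + 1) = 2 * cc - 1 - x := by ring
      have e2 : cc + (x - cc + 1) - 1 = x := by ring
      rw [e1, e2] at hh
      exact hh.symm
  intro x hx hxb
  have h1 : x ≤ a + L - 1 := by omega
  have e1 := refl a hra x hx h1
  have h2 : b - L ≤ 2 * a - 1 - x := by omega
  have h3 : 2 * a - 1 - x ≤ b + L - 1 := by omega
  have e2 := refl b hrb (2 * a - 1 - x) h2 h3
  rw [e1, e2]
  congr 1
  ring

lemma propagate_right {T : ℤ → α} {a a2 b p q : ℤ}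
    (hp0 : 0 < p) (hq0 : 0 ≤ q)
    (hA : HasPeriod T a b p) (hO : HasPeriod T a2 b q)
    (hroom : a2 + p + q - 1 ≤ b) :
    HasPeriod T a b q := by
  have key : ∀ n : ℕ, ∀ x : ℤ, a ≤ x → x + q ≤ b → a2 - x ≤ n → T x = T (x + q) := by
    intro n
    induction n with
    | zero =>
      intro x hx hxb hn
      exact hO x (by omega) hxb
    | succ n ih =>
      intro x hx hxb hn
      rcases le_or_gt a2 x with h | h
      · exact hO x h hxb
      · have e1 : T x = T (x + p) := hA x hx (by omega)
        have e2 : T (x + q) = T (x + q + p) := hA (x + q) (by omega) (by omega)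
        have e3 : T (x + p) = T (x + p + q) := ih (x + p) (by omega) (by omega) (by omega)
        have e4 : x + p + q = x + q + p := by ring
        rw [e4] at e3
        exact (e1.trans e3).trans e2.symm
  intro x hx hxb
  exact key (a2 - x).toNat x hx hxb (by omega)

lemma propagate_left {T : ℤ → α} {a b b2 p q : ℤ}
    (hp0 : 0 < p) (hq0 : 0 ≤ q)
    (hA : HasPeriod T a b p) (hO : HasPeriod T a b2 q)
    (hroom : a + p + q - 1 ≤ b2) :
    HasPeriod T a b q := by
  have key : ∀ n : ℕ, ∀ x : ℤ, a ≤ x → x + q ≤ b → x + q - b2 ≤ n → T x = T (x + q) := by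
    intro n
    induction n with
    | zero =>
      intro x hx hxb hn
      exact hO x hx (by omega)
    | succ n ih =>
      intro x hx hxb hn
      rcases le_or_gt (x + q) b2 with h | h
      · exact hO x hx h
      · have hxa : a ≤ x - p := by omega
        have e1 : T (x - p) = T (x - p + p) := hA (x - p) hxa (by omega)
        have e2 : T (x - p + q) = T (x - p + q + p) := hA (x - p + q) (by omega) (by omega)
        have e3 : T (x - p) = T (x - p + q) := ih (x - p) hxa (by omega) (by omega)
        have e4 : x - p + p = x := by ring
        have e5 : x - p + q + p = x + q := by ring
        rw [e4] at e1
        rw [e5] at e2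
        exact (e1.symm.trans e3).trans e2
  intro x hx hxb
  exact key (x + q - b2).toNat x hx hxb (by omega)

lemma HasPeriod.union {T : ℤ → α} {a1 b1 a2 b2 q : ℤ}
    (h1 : HasPeriod T a1 b1 q) (h2 : HasPeriod T a2 b2 q)
    (hov : a2 + q ≤ b1 + 1) :
    HasPeriod T a1 b2 q := by
  intro x hx hxb
  rcases le_or_gt (x + q) b1 with h | h
  · exact h1 x hx h
  · exact h2 x (by omega) hxb

lemma sub_period {T : ℤ → α} {a b : ℤ} {p q : ℕ} (hqp : q ≤ p)
    (hp : HasPeriod T a b (p : ℤ)) (hq : HasPeriod T a b (q : ℤ))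
    (hlen : (p : ℤ) + (q : ℤ) ≤ b - a + 1) :
    HasPeriod T a b ((p - q : ℕ) : ℤ) := by
  have hcast : ((p - q : ℕ) : ℤ) = (p : ℤ) - q := by omega
  rw [hcast]
  intro x hx hxb
  rcases le_or_gt (x + p) b with hb' | hb'
  · have e1 : T x = T (x + p) := hp x hx hb'
    have e2 : T (x + ((p : ℤ) - q)) = T (x + ((p : ℤ) - q) + q) := hq _ (by omega) (by omega)
    have e3 : x + ((p : ℤ) - q) + q = x + p := by ring
    rw [e3] at e2
    exact e1.trans e2.symm
  · have e1 : T (x - q) = T (x - q + q) := hq (x - q) (by omega) (by omega)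
    have e2 : T (x - q) = T (x - q + p) := hp (x - q) (by omega) (by omega)
    have e3 : x - q + q = x := by ring
    have e4 : x - (q : ℤ) + p = x + ((p : ℤ) - q) := by ring
    rw [e3] at e1
    rw [e4] at e2
    exact e1.symm.trans e2

lemma gcd_range_succ (f : ℕ → ℕ) (k : ℕ) :
    (Finset.range (k + 1)).gcd f = Nat.gcd ((Finset.range k).gcd f) (f k) := by
  rw [Finset.range_add_one, Finset.gcd_insert, Nat.gcd_comm]
  rfl

lemma gcd_sub_left {p q : ℕ} (h : q ≤ p) : Nat.gcd (p - q) q = Nat.gcd p q :=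
  Nat.gcd_sub_self_left h

lemma fw_aux (T : ℤ → α) (a b : ℤ) :
    ∀ n p q : ℕ, p + q ≤ n →
      HasPeriod T a b (p : ℤ) → HasPeriod T a b (q : ℤ) →
      (p : ℤ) + (q : ℤ) ≤ b - a + 1 →
      HasPeriod T a b ((Nat.gcd p q : ℕ) : ℤ) := by
  intro n
  induction n with
  | zero =>
    intro p q hn hp hq _
    obtain rfl : p = 0 := by omega
    obtain rfl : q = 0 := by omega
    simpa using hp
  | succ n ih =>
    intro p q hn hp hq hlen
    rcases Nat.eq_zero_or_pos p with rfl | hp0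
    · simpa using hq
    rcases Nat.eq_zero_or_pos q with rfl | hq0
    · simpa using hp
    rcases le_total q p with hqp | hpq
    · have hsub := sub_period hqp hp hq hlen
      have hgd := ih (p - q) q (by omega) hsub hq (by omega)
      rwa [gcd_sub_left hqp] at hgd
    · have hsub := sub_period hpq hq hp (by omega)
      have hgd := ih (q - p) p (by omega) hsub hp (by omega)
      rwa [gcd_sub_left hpq, Nat.gcd_comm] at hgd

end Stmt3Aux

open Stmt3Aux in
/-- Given `m ≥ 5` increasing centers within a segment of length `2^ℓ`, all with palindromic
radius at least `2^ℓ`, the quantity `p = 2·gcd` of consecutive differences satisfies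
`p ≤ 2^ℓ / 2` and `p` is a period of `T[(c_1-2^ℓ)..(c_m+2^ℓ-1)]`. -/
theorem stmt3 {α : Type*} (T : ℤ → α) (m ℓ : ℕ) (c : ℕ → ℤ) (hm : 5 ≤ m)
    (hmono : ∀ i, i + 1 < m → c i < c (i + 1))
    (hseg : c (m - 1) - c 0 ≤ 2 ^ ℓ)
    (hrad : ∀ i, i < m → ∀ t : ℤ, 1 ≤ t → t ≤ 2 ^ ℓ → T (c i - t) = T (c i + t - 1))
    (g : ℕ) (hg : g = (Finset.range (m - 1)).gcd fun i => (c (i + 1) - c i).natAbs) :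
    2 * (2 * (g : ℤ)) ≤ 2 ^ ℓ ∧
    ∀ x : ℤ, c 0 - 2 ^ ℓ ≤ x → x + 2 * (g : ℤ) ≤ c (m - 1) + 2 ^ ℓ - 1 →
      T x = T (x + 2 * (g : ℤ)) := by
  set L : ℤ := 2 ^ ℓ with hLdef
  have hL0 : 0 < L := by positivity
  obtain ⟨G, hG⟩ : ∃ G : ℕ → ℕ, G = fun i => (Finset.range i).gcd fun j => (c (j + 1) - c j).natAbs :=
    ⟨_, rfl⟩
  -- monotonicity of c on [0, m-1]
  have hmono' : ∀ i j, i ≤ j → j ≤ m - 1 → c i ≤ c j := by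
    intro i j hij hj
    induction j with
    | zero =>
      obtain rfl : i = 0 := by omega
      exact le_rfl
    | succ k ih =>
      rcases Nat.lt_or_ge i (k + 1) with h | h
      · have h1 : c i ≤ c k := ih (by omega) (by omega)
        have h2 : c k < c (k + 1) := hmono k (by omega)
        omega
      · obtain rfl : i = k + 1 := by omega
        exact le_rfl
  -- differences are positive
  have hd : ∀ j, j + 1 ≤ m - 1 → 1 ≤ c (j + 1) - c j := by
    intro j hj
    have := hmono j (by omega)
    omega
  -- G i divides differences
  have hdvd : ∀ i j, j < i → G i ∣ (c (j + 1) - c j).natAbs := by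
    intro i j h
    rw [hG]
    exact Finset.gcd_dvd (Finset.mem_range.2 h)
  have hGle : ∀ i j, j < i → i ≤ m - 1 → (G i : ℤ) ≤ c (j + 1) - c j := by
    intro i j h hi
    have h1 := hd j (by omega)
    have h2 := Nat.le_of_dvd (by omega) (hdvd i j h)
    omega
  have hGpos : ∀ i, 1 ≤ i → i ≤ m - 1 → 0 < G i := by
    intro i h1 h2
    have h3 := hd 0 (by omega)
    exact Nat.pos_of_dvd_of_pos (hdvd i 0 (by omega)) (by omega)
  have hGsucc : ∀ k, G (k + 1) = Nat.gcd (G k) (c (k + 1) - c k).natAbs := by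
    intro k
    rw [hG]
    exact gcd_range_succ _ k
  -- main induction
  have main : ∀ i, 1 ≤ i → i ≤ m - 1 →
      HasPeriod T (c 0 - L) (c i + L - 1) ((2 * G i : ℕ) : ℤ) := by
    intro i
    induction i with
    | zero => omega
    | succ k ih =>
      intro _ hk
      rcases Nat.eq_zero_or_pos k with rfl | hk0
      · -- base case i = 1
        have h2c := two_centers (hrad 0 (by omega)) (hrad 1 (by omega))
          (le_of_lt (hmono 0 (by omega)))
        have hval : ((2 * G 1 : ℕ) : ℤ) = 2 * (c 1 - c 0) := by
          have h1 : G 1 = (c 1 - c 0).natAbs := by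
            rw [hG]; simp
          have h2 : 1 ≤ c 1 - c 0 := by
            have := hd 0 (by omega); simpa using this
          rw [h1]
          omega
        rw [hval]
        exact h2c
      · have hkm : k ≤ m - 1 := by omega
        have A := ih (by omega) hkm
        have B := two_centers (hrad k (by omega)) (hrad (k + 1) (by omega))
          (le_of_lt (hmono k (by omega)))
        have hdkc : ((c (k + 1) - c k).natAbs : ℤ) = c (k + 1) - c k := by
          have := hd k (by omega)
          omega
        obtain ⟨dk, hdk⟩ : ∃ dk : ℕ, dk = (c (k + 1) - c k).natAbs := ⟨_, rfl⟩
        rw [← hdk] at hdkc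
        -- distance bounds
        have hsum : (c 1 - c 0) + (c (k + 1) - c k) ≤ L := by
          have h1 : c 1 ≤ c k := hmono' 1 k hk0 hkm
          have h2 : c (k + 1) ≤ c (m - 1) := hmono' (k + 1) (m - 1) hk le_rfl
          omega
        have hGk : (G k : ℤ) ≤ c 1 - c 0 := by
          have := hGle k 0 hk0 hkm; simpa using this
        have hGk1a : (G (k + 1) : ℤ) ≤ c 1 - c 0 := by
          have := hGle (k + 1) 0 (by omega) hk; simpa using this
        have hdpos : 1 ≤ c (k + 1) - c k := hd k (by omega)
        have hGk1b : (G (k + 1) : ℤ) ≤ (dk : ℤ) := by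
          have h1 := Nat.le_of_dvd (by omega) (hdvd (k + 1) k (by omega))
          rw [← hdk] at h1
          omega
        have hGkpos := hGpos k hk0 hkm
        have hdkpos : 0 < dk := by omega
        -- restrict to overlap O = [c k - L, c k + L - 1]
        have A' : HasPeriod T (c k - L) (c k + L - 1) ((2 * G k : ℕ) : ℤ) :=
          A.mono (by have := hmono' 0 k (by omega) hkm; omega) le_rfl
        have B' : HasPeriod T (c k - L) (c k + L - 1) ((2 * dk : ℕ) : ℤ) := by
          have e : ((2 * dk : ℕ) : ℤ) = 2 * (c (k + 1) - c k) := by omega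
          rw [e]
          exact B.mono le_rfl (by omega)
        have hO := fw_aux T (c k - L) (c k + L - 1) (2 * G k + 2 * dk) (2 * G k) (2 * dk)
          le_rfl A' B' (by omega)
        have hgcd2 : Nat.gcd (2 * G k) (2 * dk) = 2 * G (k + 1) := by
          rw [Nat.gcd_mul_left, hdk, ← hGsucc]
        rw [hgcd2] at hO
        -- propagate the refined period to both intervals
        have hp0' : (0 : ℤ) < ((2 * G k : ℕ) : ℤ) := by
          exact_mod_cast Nat.pos_of_ne_zero (by omega)
        have hq0' : (0 : ℤ) ≤ ((2 * G (k + 1) : ℕ) : ℤ) := by positivity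
        have hroomA : (c k - L) + ((2 * G k : ℕ) : ℤ) + ((2 * G (k + 1) : ℕ) : ℤ) - 1 ≤
            c k + L - 1 := by push_cast; omega
        have A'' : HasPeriod T (c 0 - L) (c k + L - 1) ((2 * G (k + 1) : ℕ) : ℤ) :=
          propagate_right hp0' hq0' A hO hroomA
        have hB : HasPeriod T (c k - L) (c (k + 1) + L - 1) ((2 * dk : ℕ) : ℤ) := by
          have e : ((2 * dk : ℕ) : ℤ) = 2 * (c (k + 1) - c k) := by omega
          rw [e]
          exact B
        have hpB : (0 : ℤ) < ((2 * dk : ℕ) : ℤ) := by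
          exact_mod_cast Nat.pos_of_ne_zero (by omega)
        have hroomB : (c k - L) + ((2 * dk : ℕ) : ℤ) + ((2 * G (k + 1) : ℕ) : ℤ) - 1 ≤
            c k + L - 1 := by push_cast; omega
        have B'' : HasPeriod T (c k - L) (c (k + 1) + L - 1) ((2 * G (k + 1) : ℕ) : ℤ) :=
          propagate_left hpB hq0' hB hO hroomB
        have hov : (c k - L) + ((2 * G (k + 1) : ℕ) : ℤ) ≤ (c k + L - 1) + 1 := by
          push_cast; omega
        exact A''.union B'' hov
  -- conclusion
  have hgG : g = G (m - 1) := by rw [hG]; exact hg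
  constructor
  · -- 4g ≤ L
    have hsum : ∀ k, k ≤ m - 1 → (k : ℤ) * g ≤ c k - c 0 := by
      intro k
      induction k with
      | zero => simp
      | succ n ih =>
        intro h
        have h1 := ih (by omega)
        have h2 : (g : ℤ) ≤ c (n + 1) - c n := by
          have h3 := hGle (m - 1) n (by omega) le_rfl
          rw [← hgG] at h3
          exact h3
        push_cast
        nlinarith
    have h4 := hsum (m - 1) le_rfl
    have hm4 : (4 : ℤ) ≤ ((m - 1 : ℕ) : ℤ) := by omega
    have hg0 : (0 : ℤ) ≤ (g : ℤ) := by positivity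
    nlinarith
  · intro x hx hxb
    have hmain := main (m - 1) (by omega) le_rfl
    have e : ((2 * G (m - 1) : ℕ) : ℤ) = 2 * (g : ℤ) := by rw [← hgG]; push_cast; ring
    rw [e] at hmain
    exact hmain x hx hxb
end

section
/- With p and c_1 as above (m ≥ 5 centers with radii ≥ 2^ℓ inside a segment of length 2^ℓ, and p = 2·gcd of consecutive differences), every c_i is of the form c_1 + α·(p/2) for some nonnegative integer α, and the word T[c_1..(c_1 + p - 1)] is an even-length palindrome. -/
/-- Iterated application of a local period. -/
private lemma perMul {α : Type*} (T : ℤ → α) (d : ℕ) (A B : ℤ)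
    (h : ∀ x : ℤ, A ≤ x → x + d ≤ B → T x = T (x + d)) :
    ∀ k : ℕ, ∀ x : ℤ, A ≤ x → x + k * d ≤ B → T x = T (x + k * d) := by
  intro k
  induction k with
  | zero => intro x _ _; simp
  | succ n ih =>
    intro x hx hxb
    have hnd : (0:ℤ) ≤ (n : ℤ) * d := by positivity
    have hd0 : (0:ℤ) ≤ (d : ℤ) := by positivity
    have hcast : ((n+1 : ℕ) : ℤ) * d = (n : ℤ) * d + d := by push_cast; ring
    rw [hcast] at hxb ⊢
    have h1 : x + (n : ℤ) * d ≤ B := by linarith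
    have h2 := h (x + (n : ℤ) * d) (by linarith) (by linarith)
    rw [ih x hx h1, h2, add_assoc]

/-- Fine–Wilf, ordered-periods version, by strong induction on `p + q`. -/
private lemma fwAux {α : Type*} (T : ℤ → α) :
    ∀ n p q : ℕ, p + q ≤ n → 0 < p → 0 < q → p ≤ q →
    ∀ A B : ℤ, A + p + q ≤ B + Nat.gcd p q + 1 →
    (∀ x : ℤ, A ≤ x → x + p ≤ B → T x = T (x + p)) →
    (∀ x : ℤ, A ≤ x → x + q ≤ B → T x = T (x + q)) →
    ∀ x : ℤ, A ≤ x → x + Nat.gcd p q ≤ B → T x = T (x + Nat.gcd p q) := by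
  intro n
  induction n with
  | zero => intro p q h hp hq; omega
  | succ n ih =>
    intro p q hn hp hq hpq A B hlen hPp hPq
    rcases eq_or_lt_of_le hpq with rfl | hlt
    · simpa [Nat.gcd_self] using hPp
    · set d := Nat.gcd p q with hd
      set r := q - p with hr
      have hrpos : 0 < r := by omega
      have hgcd_pr : Nat.gcd p r = d := by
        rw [hd, hr, Nat.gcd_sub_self_right hpq]
      have hdp : d ∣ p := Nat.gcd_dvd_left p q
      have hdpos : 0 < d := Nat.gcd_pos_of_pos_left q hp
      have hdr : d ∣ r := by rw [← hgcd_pr]; exact Nat.gcd_dvd_right p r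
      have hdler : d ≤ r := Nat.le_of_dvd hrpos hdr
      have hdlep : d ≤ p := Nat.le_of_dvd hp hdp
      have hrq : (r : ℤ) = (q : ℤ) - p := by omega
      -- period r on [A, B - p]
      have hPr : ∀ x : ℤ, A ≤ x → x + r ≤ B - p → T x = T (x + r) := by
        intro x hx hxr
        have e1 := hPq x hx (by omega)
        have e2 := hPp (x + r) (by omega) (by omega)
        rw [show x + (r:ℤ) + p = x + q by omega] at e2
        exact e1.trans e2.symm
      have hPp' : ∀ x : ℤ, A ≤ x → x + p ≤ B - p → T x = T (x + p) := by
        intro x hx hxp; exact hPp x hx (by omega)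
      -- period d on [A, B - p] from induction hypothesis
      have hPd : ∀ x : ℤ, A ≤ x → x + d ≤ B - p → T x = T (x + d) := by
        rcases le_total p r with h1 | h1
        · have := ih p r (by omega) hp hrpos h1 A (B - p)
            (by rw [hgcd_pr]; omega) hPp' hPr
          simpa [hgcd_pr] using this
        · have := ih r p (by omega) hrpos hp h1 A (B - p)
            (by rw [Nat.gcd_comm r p, hgcd_pr]; omega) hPr hPp'
          simpa [Nat.gcd_comm r p, hgcd_pr] using this
      -- extension to [A, B]
      intro x hx hxd
      by_cases hcase : x + d ≤ B - p
      · exact hPd x hx hcase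
      · by_cases hcase2 : x ≤ B - p
        · -- x ≤ B - p < x + d
          have hqpd : p + d ≤ q := by omega
          have hxA : A + p - d ≤ x := by omega
          obtain ⟨k, hk⟩ := hdp
          have hk1 : 1 ≤ k := by
            rcases Nat.eq_zero_or_pos k with h0 | h0
            · subst h0; simp at hk; omega
            · exact h0
          have hkd : ((k - 1 : ℕ) : ℤ) * d = (p : ℤ) - d := by
            have : ((k:ℤ) - 1) * d = (p : ℤ) - d := by
              have hkz : (p : ℤ) = (d : ℤ) * k := by exact_mod_cast hk
              linear_combination -hkz
            rw [show ((k - 1 : ℕ) : ℤ) = (k : ℤ) - 1 by omega]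
            exact this
          have e1 := hPp (x + d - p) (by omega) (by omega)
          rw [show x + (d:ℤ) - p + p = x + d by ring] at e1
          have e2 := perMul T d A (B - p) hPd (k - 1) (x + d - p) (by omega)
            (by rw [hkd]; omega)
          rw [hkd, show x + (d:ℤ) - p + ((p:ℤ) - d) = x by ring] at e2
          exact e2.symm.trans e1
        · -- B - p < x
          have e1 := hPp (x - p) (by omega) (by omega)
          rw [show x - (p:ℤ) + p = x by ring] at e1
          have e2 := hPd (x - p) (by omega) (by omega)
          have e3 := hPp (x - p + d) (by omega) (by omega)
          rw [show x - (p:ℤ) + d + p = x + d by ring] at e3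
          exact e1.symm.trans (e2.trans e3)

/-- Fine–Wilf theorem on integer windows. -/
private lemma fw {α : Type*} (T : ℤ → α) (p q : ℕ) (hp : 0 < p) (hq : 0 < q)
    (A B : ℤ) (hlen : A + p + q ≤ B + Nat.gcd p q + 1)
    (hPp : ∀ x : ℤ, A ≤ x → x + p ≤ B → T x = T (x + p))
    (hPq : ∀ x : ℤ, A ≤ x → x + q ≤ B → T x = T (x + q)) :
    ∀ x : ℤ, A ≤ x → x + Nat.gcd p q ≤ B → T x = T (x + Nat.gcd p q) := by
  rcases le_total p q with h | h
  · exact fwAux T (p + q) p q le_rfl hp hq h A B hlen hPp hPq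
  · have := fwAux T (p + q) q p (by omega) hq hp h A B
      (by rw [Nat.gcd_comm q p]; omega) hPq hPp
    simpa [Nat.gcd_comm q p] using this

/-- With `p = 2g` the doubled gcd of consecutive differences of `m ≥ 5` centers with radii
`≥ 2^ℓ` inside a segment of length `2^ℓ`, every center is of the form `c_1 + α·(p/2)` and
`T[c_1..(c_1+p-1)]` is an even-length palindrome. -/
theorem stmt4 {α : Type*} (T : ℤ → α) (m ℓ : ℕ) (c : ℕ → ℤ) (hm : 5 ≤ m)
    (hmono : ∀ i, i + 1 < m → c i < c (i + 1))
    (hseg : c (m - 1) - c 0 ≤ 2 ^ ℓ)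
    (hrad : ∀ i, i < m → ∀ t : ℤ, 1 ≤ t → t ≤ 2 ^ ℓ → T (c i - t) = T (c i + t - 1))
    (g : ℕ) (hg : g = (Finset.range (m - 1)).gcd fun i => (c (i + 1) - c i).natAbs)
    (hp : 2 * (2 * (g : ℤ)) ≤ 2 ^ ℓ) :
    (∀ i, i < m → ∃ a : ℕ, c i = c 0 + (a : ℤ) * (g : ℤ)) ∧
    (∀ j : ℤ, 0 ≤ j → j < 2 * (g : ℤ) →
      T (c 0 + j) = T (c 0 + 2 * (g : ℤ) - 1 - j)) := by
  set L : ℤ := 2 ^ ℓ with hL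
  have hL1 : (1:ℤ) ≤ L := one_le_pow₀ (by norm_num)
  set gap : ℕ → ℕ := fun i => (c (i + 1) - c i).natAbs with hgap
  set G : ℕ → ℕ := fun k => (Finset.range (k + 1)).gcd gap with hG
  -- monotonicity
  have mono' : ∀ k i : ℕ, i + k < m → c i ≤ c (i + k) := by
    intro k
    induction k with
    | zero => intro i _; simp
    | succ n ih =>
      intro i h
      have h1 := ih i (by omega)
      have h2 := hmono (i + n) (by omega)
      have : i + (n + 1) = (i + n) + 1 := by omega
      rw [this]
      exact le_trans h1 (le_of_lt h2)
  have mono : ∀ i j : ℕ, i ≤ j → j < m → c i ≤ c j := by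
    intro i j hij hj
    obtain ⟨k, rfl⟩ := Nat.exists_eq_add_of_le hij
    exact mono' k i (by omega)
  have gapcast : ∀ i : ℕ, i + 1 < m → (gap i : ℤ) = c (i + 1) - c i := by
    intro i h
    simp only [hgap]
    exact Int.natAbs_of_nonneg (by linarith [hmono i h])
  have gappos : ∀ i : ℕ, i + 1 < m → 0 < gap i := by
    intro i h
    have := hmono i h
    have hc := gapcast i h
    by_contra h0
    have : gap i = 0 := by omega
    rw [this] at hc; simp at hc; omega
  have Gdvd : ∀ k i : ℕ, i ≤ k → G k ∣ gap i := by
    intro k i hik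
    exact Finset.gcd_dvd (by simp [Finset.mem_range]; omega)
  have Gpos : ∀ k : ℕ, k + 1 < m → 0 < G k := by
    intro k hk
    rcases Nat.eq_zero_or_pos (G k) with h0 | h0
    · have := Gdvd k 0 (by omega)
      rw [h0] at this
      have := Nat.eq_zero_of_zero_dvd this
      have := gappos 0 (by omega)
      omega
    · exact h0
  have Gle : ∀ k : ℕ, (G k : ℤ) ≤ c 1 - c 0 := by
    intro k
    have h1 := Nat.le_of_dvd (gappos 0 (by omega)) (Gdvd k 0 (by omega))
    have h2 := gapcast 0 (by omega)
    have h3 : c (0 + 1) = c 1 := rfl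
    omega
  have Gsucc : ∀ k : ℕ, G (k + 1) = Nat.gcd (gap (k + 1)) (G k) := by
    intro k
    simp only [hG]
    rw [Finset.range_add_one, Finset.gcd_insert]
    rfl
  -- reflection lemma
  have hrefl : ∀ i : ℕ, i < m → ∀ x : ℤ, c i - L ≤ x → x ≤ c i + L - 1 →
      T x = T (2 * c i - 1 - x) := by
    intro i him x h1 h2
    rcases le_or_gt x (c i - 1) with h | h
    · have e := hrad i him (c i - x) (by omega) (by omega)
      rw [show c i - (c i - x) = x by ring,
        show c i + (c i - x) - 1 = 2 * c i - 1 - x by ring] at e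
      exact e
    · have e := hrad i him (x - c i + 1) (by omega) (by omega)
      rw [show c i - (x - c i + 1) = 2 * c i - 1 - x by ring,
        show c i + (x - c i + 1) - 1 = x by ring] at e
      exact e.symm
  -- pair lemma: period 2(c(i+1)-c i) on [c i - L, c (i+1) + L - 1]
  have hpair : ∀ i : ℕ, i + 1 < m → ∀ x : ℤ, c i - L ≤ x →
      x + 2 * (c (i + 1) - c i) ≤ c (i + 1) + L - 1 →
      T x = T (x + 2 * (c (i + 1) - c i)) := by
    intro i h x hx hxb
    have hab := hmono i h
    have e1 := hrefl i (by omega) x hx (by linarith)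
    have e2 := hrefl (i + 1) h (x + 2 * (c (i + 1) - c i)) (by linarith) hxb
    rw [show 2 * c (i + 1) - 1 - (x + 2 * (c (i + 1) - c i)) = 2 * c i - 1 - x
      by ring] at e2
    exact e1.trans e2.symm
  -- the chain: period 2 * G k on [c k - L, c 1 + L - 1]
  have chain : ∀ k : ℕ, k + 2 ≤ m → ∀ x : ℤ, c k - L ≤ x →
      x + 2 * (G k : ℤ) ≤ c 1 + L - 1 → T x = T (x + 2 * (G k : ℤ)) := by
    intro k
    induction k with
    | zero =>
      intro h2 x hx hxb
      have hG0 : (G 0 : ℤ) = c 1 - c 0 := by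
        have : G 0 = gap 0 := by
          simp [hG, Finset.range_one]
        rw [this]; exact gapcast 0 (by omega)
      rw [hG0] at hxb ⊢
      exact hpair 0 (by omega) x hx hxb
    | succ k ih =>
      intro h2 x hx hxb
      have hGk1pos : 0 < G (k + 1) := Gpos (k + 1) (by omega)
      have hGkpos : 0 < G k := Gpos k (by omega)
      have hgp : 0 < gap (k + 1) := gappos (k + 1) (by omega)
      have hgcdeq : Nat.gcd (2 * G k) (2 * gap (k + 1)) = 2 * G (k + 1) := by
        rw [Nat.gcd_mul_left, Gsucc k, Nat.gcd_comm]
      have hgc := gapcast (k + 1) (by omega)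
      have hE : c (k + 1 + 1) = c (k + 2) := rfl
      have hc12 : c (k + 2) ≤ c (m - 1) := mono (k + 2) (m - 1) (by omega) (by omega)
      have hc1k : c 1 ≤ c (k + 1) := mono 1 (k + 1) (by omega) (by omega)
      have hGkle := Gle k
      have h01 := hmono 0 (by omega)
      -- periods for Fine–Wilf on [c (k+1) - L, c 1 + L - 1]
      have hPp : ∀ y : ℤ, c (k + 1) - L ≤ y → y + (2 * G k : ℕ) ≤ c 1 + L - 1 →
          T y = T (y + (2 * G k : ℕ)) := by
        intro y hy hyb
        have hck : c k ≤ c (k + 1) := mono k (k + 1) (by omega) (by omega)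
        have := ih (by omega) y (by omega) (by push_cast at hyb ⊢; omega)
        rw [show ((2 * G k : ℕ) : ℤ) = 2 * (G k : ℤ) by push_cast; ring]
        exact this
      have hPq : ∀ y : ℤ, c (k + 1) - L ≤ y → y + (2 * gap (k + 1) : ℕ) ≤ c 1 + L - 1 →
          T y = T (y + (2 * gap (k + 1) : ℕ)) := by
        intro y hy hyb
        have hcast : ((2 * gap (k + 1) : ℕ) : ℤ) = 2 * (c (k + 2) - c (k + 1)) := by
          push_cast; omega
        rw [hcast] at hyb ⊢
        exact hpair (k + 1) (by omega) y hy (by omega)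
      have hlen : (c (k + 1) - L) + (2 * G k : ℕ) + (2 * gap (k + 1) : ℕ) ≤
          (c 1 + L - 1) + Nat.gcd (2 * G k) (2 * gap (k + 1)) + 1 := by
        rw [hgcdeq]
        have hcast1 : ((2 * G k : ℕ) : ℤ) = 2 * (G k : ℤ) := by push_cast; ring
        have hcast2 : ((2 * gap (k + 1) : ℕ) : ℤ) = 2 * (c (k + 2) - c (k + 1)) := by
          push_cast; omega
        have hcast3 : (1 : ℤ) ≤ ((2 * G (k + 1) : ℕ) : ℤ) := by push_cast; omega
        rw [hcast1, hcast2]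
        have hs2 : c (k + 2) - c 0 ≤ L := by omega
        linarith
      have main := fw T (2 * G k) (2 * gap (k + 1)) (by omega) (by omega)
        (c (k + 1) - L) (c 1 + L - 1) hlen hPp hPq x hx
        (by rw [hgcdeq]; push_cast at hxb ⊢; omega)
      rw [hgcdeq] at main
      rw [show ((2 * G (k + 1) : ℕ) : ℤ) = 2 * (G (k + 1) : ℤ) by push_cast; ring] at main
      exact main
  -- g = G (m - 2)
  have hGg : G (m - 2) = g := by
    rw [hg]
    simp only [hG]
    rw [show m - 2 + 1 = m - 1 by omega]
  have hgpos : 0 < g := by rw [← hGg]; exact Gpos (m - 2) (by omega)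
  have hper : ∀ x : ℤ, c (m - 2) - L ≤ x → x + 2 * (g : ℤ) ≤ c 1 + L - 1 →
      T x = T (x + 2 * (g : ℤ)) := by
    have := chain (m - 2) (by omega)
    rwa [hGg] at this
  -- part 1
  have hdvd : ∀ i : ℕ, i < m → (g : ℤ) ∣ (c i - c 0) ∧ c 0 ≤ c i := by
    intro i
    induction i with
    | zero => intro _; simp
    | succ n ih =>
      intro h
      obtain ⟨h1, h2⟩ := ih (by omega)
      have hmem : g ∣ gap n := by
        rw [hg]
        exact Finset.gcd_dvd (by simp [Finset.mem_range]; omega)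
      have hgc := gapcast n (by omega)
      have hdvd2 : (g : ℤ) ∣ (c (n + 1) - c n) := by
        rw [← hgc]
        exact Int.natCast_dvd_natCast.mpr hmem
      constructor
      · have : c (n + 1) - c 0 = (c (n + 1) - c n) + (c n - c 0) := by ring
        rw [this]
        exact dvd_add hdvd2 h1
      · linarith [hmono n h]
  constructor
  · intro i hi
    obtain ⟨⟨k, hk⟩, h2⟩ := hdvd i hi
    have hk0 : 0 ≤ k := by
      by_contra h0
      push_neg at h0
      have : (g : ℤ) * k ≤ (g : ℤ) * (-1) := by
        apply mul_le_mul_of_nonneg_left (by omega) (by positivity)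
      omega
    refine ⟨k.toNat, ?_⟩
    rw [show ((k.toNat : ℤ)) = k by omega]
    linarith [hk]
  · -- part 2
    have hgap2 : (g : ℤ) ≤ c (m - 1) - c (m - 2) := by
      have hmem : g ∣ gap (m - 2) := by
        rw [hg]
        exact Finset.gcd_dvd (by simp [Finset.mem_range]; omega)
      have hle := Nat.le_of_dvd (gappos (m - 2) (by omega)) hmem
      have hgc := gapcast (m - 2) (by omega)
      rw [show m - 2 + 1 = m - 1 by omega] at hgc
      omega
    have hA : c (m - 2) - L ≤ c 0 - g := by
      have := hseg
      omega
    have h01 := hmono 0 (by omega)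
    have hc01 : c (0 + 1) = c 1 := rfl
    have main2 : ∀ j : ℤ, 0 ≤ j → j < (g : ℤ) →
        T (c 0 + j) = T (c 0 + 2 * (g : ℤ) - 1 - j) := by
      intro j h0 h1
      have e1 := hrad 0 (by omega) (j + 1) (by omega) (by omega)
      rw [show c 0 + (j + 1) - 1 = c 0 + j by ring] at e1
      have e2 := hper (c 0 - 1 - j) (by omega) (by omega)
      rw [show c 0 - 1 - j + 2 * (g : ℤ) = c 0 + 2 * (g : ℤ) - 1 - j by ring] at e2
      rw [show c 0 - (j + 1) = c 0 - 1 - j by ring] at e1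
      exact e1.symm.trans e2
    intro j h0 h1
    rcases lt_or_ge j (g : ℤ) with h | h
    · exact main2 j h0 h
    · have h' := (main2 (2 * (g : ℤ) - 1 - j) (by omega) (by omega)).symm
      rw [show c 0 + (2 * (g : ℤ) - 1 - j) = c 0 + 2 * (g : ℤ) - 1 - j by ring,
        show c 0 + 2 * (g : ℤ) - 1 - (2 * (g : ℤ) - 1 - j) = c 0 + j by ring] at h'
      exact h'
end

section
/- Consider a word T[1..h] containing the factor u w^k v starting at position i, where |u| = |w| = |v|, w is a palindrome, u ≠ w, and v ≠ w. For any α ∈ {1, 2, ..., k}: if the palindrome centered at position i + α|u| reaches h (i.e., R(i + α|u|) ≥ h - (i + α|u|) + 1), then α = k/2 + 1. -/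
/-!
Reflecting through the centre `c = i + a|w|` maps block `b` of `u w^k v` (blocks counted from `0`)
onto block `2a - 1 - b`, reversing it. If `2a < k + 2`, the block `u` lands on one of the `w`-blocks,
so `u = wᴿ = w`; if `2a > k + 2`, the same happens to `v`. Hence `2a = k + 2`.
-/

/-- The palindrome centered at `c` in `T[1..h]` reaches `h`, i.e. `R(c) ≥ h - c + 1`. -/
def reaches {α : Type*} (T : ℤ → α) (h c : ℤ) : Prop :=
  ∀ t : ℤ, 1 ≤ t → t ≤ h - c + 1 → T (c - t) = T (c + t - 1)

def OccursAt {α : Type*} (T : ℤ → α) (p : ℤ) (x : List α) : Prop :=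
  ∀ s (hs : s < x.length), T (p + s) = x[s]

theorem reaches.apply_mirror {α : Type*} {T : ℤ → α} {h c : ℤ} (hc : reaches T h c) {x : ℤ}
    (hx₁ : 2 * c - 1 - h ≤ x) (hx₂ : x ≤ h) : T (2 * c - 1 - x) = T x := by
  rcases le_or_gt c x with hcx | hxc
  · have := hc (x - c + 1) (by omega) (by omega)
    rwa [show c - (x - c + 1) = 2 * c - 1 - x by ring, show c + (x - c + 1) - 1 = x by ring]
      at this
  · have := hc (c - x) (by omega) (by omega)
    rw [show c - (c - x) = x by ring, show c + (c - x) - 1 = 2 * c - 1 - x by ring] at this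
    exact this.symm

namespace OccursAt

variable {α : Type*} {T : ℤ → α} {p q : ℤ} {x y w : List α}

theorem append_iff :
    OccursAt T p (x ++ y) ↔ OccursAt T p x ∧ OccursAt T (p + x.length) y := by
  refine ⟨fun hxy => ⟨fun s hs => ?_, fun s hs => ?_⟩, fun ⟨hx, hy⟩ s hs => ?_⟩
  · rw [hxy s (by simp; omega), List.getElem_append_left hs]
  · have := hxy (x.length + s) (by simp; omega)
    rw [List.getElem_append_right (by omega)] at this
    simpa [add_assoc] using this
  · by_cases hsx : s < x.length
    · rw [List.getElem_append_left hsx, hx s hsx]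
    · rw [List.getElem_append_right (by omega), ← hy _ (by simp at hs; omega)]
      congr 1
      omega

theorem of_flatten_replicate {k m : ℕ} (hw : OccursAt T p (List.replicate k w).flatten)
    (hm : m < k) : OccursAt T (p + m * w.length) w := by
  induction k generalizing p m with
  | zero => omega
  | succ k ih =>
    rw [List.replicate_succ, List.flatten_cons, append_iff] at hw
    rcases m with _ | m
    · simpa using hw.1
    · convert ih hw.2 (m := m) (by omega) using 1
      push_cast
      ring

theorem eq_of_length_eq (hx : OccursAt T p x) (hy : OccursAt T p y)
    (hlen : x.length = y.length) : x = y :=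
  List.ext_getElem hlen fun s h₁ h₂ => (hx s h₁).symm.trans (hy s h₂)

theorem reverse_of_reaches {h c : ℤ} (hc : reaches T h c) (hx : OccursAt T p x)
    (hp : 2 * c - 1 - h ≤ p) (hpx : p + x.length ≤ h + 1) :
    OccursAt T (2 * c - p - x.length) x.reverse := by
  intro s hs
  rw [List.length_reverse] at hs
  rw [List.getElem_reverse, ← hx _ (by omega), ← hc.apply_mirror (by omega) (by omega)]
  congr 1
  rw [Nat.cast_sub (by omega), Nat.cast_sub (by omega)]
  ring

theorem eq_of_reaches_of_palindrome {h c : ℤ} (hc : reaches T h c) (hx : OccursAt T p x)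
    (hw : OccursAt T q w) (hpal : w.reverse = w) (hlen : x.length = w.length)
    (hpq : p + q + w.length = 2 * c) (hp : p + w.length ≤ h + 1) (hq : q + w.length ≤ h + 1) :
    x = w := by
  have hrev := hx.reverse_of_reaches hc (by omega) (by omega)
  rw [show 2 * c - p - x.length = q by omega] at hrev
  rw [← List.reverse_reverse x, hrev.eq_of_length_eq hw (by simp [hlen]), hpal]

end OccursAt

/-- If `u w^k v` with `|u| = |w| = |v|`, `w` a palindrome, `u ≠ w`, `v ≠ w`, occurs at
position `i` in `T[1..h]`, and for `α ∈ {1,…,k}` the palindrome centered at `i + α|u|`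
reaches `h`, then `α = k/2 + 1`. -/
theorem stmt6 {α : Type*} [Inhabited α] (T : ℤ → α) (h i : ℤ) (u w v : List α) (k : ℕ)
    (hu : u.length = w.length) (hv : v.length = w.length)
    (hw : w.reverse = w) (huw : u ≠ w) (hvw : v ≠ w)
    (hbound : i + ((k + 2) * w.length : ℕ) - 1 ≤ h)
    (hfac : ∀ j : ℕ, j < (k + 2) * w.length →
      T (i + (j : ℤ)) = (u ++ (List.replicate k w).flatten ++ v).getD j default)
    (a : ℕ) (ha1 : 1 ≤ a) (ha2 : a ≤ k)
    (hreach : reaches T h (i + (a * w.length : ℕ))) :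
    2 * a = k + 2 := by
  set n := w.length
  have hocc : OccursAt T i (u ++ (List.replicate k w).flatten ++ v) := fun s hs => by
    have hs' : s < (k + 2) * n := by simp [hu, hv] at hs; nlinarith
    rw [hfac s hs', List.getD_eq_getElem]
  obtain ⟨hprefix, hv_occ⟩ := OccursAt.append_iff.1 hocc
  obtain ⟨hu_occ, hws⟩ := OccursAt.append_iff.1 hprefix
  have hblock : ∀ m < k, OccursAt T (i + n + m * n) w := fun m hm => by
    simpa [hu] using hws.of_flatten_replicate hm
  have hv_pos : ((u ++ (List.replicate k w).flatten).length : ℤ) = n + k * n := by simp [hu, n]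
  rw [hv_pos] at hv_occ
  push_cast at hbound hreach
  rcases lt_trichotomy (2 * a) (k + 2) with hlt | heq | hgt
  · obtain ⟨m, hm⟩ : ∃ m, 2 * a = m + 2 := ⟨2 * a - 2, by omega⟩
    have hmZ : (2 * a : ℤ) = m + 2 := by exact_mod_cast hm
    have hmk : (m : ℤ) + 2 ≤ k + 1 := by omega
    exact absurd (hu_occ.eq_of_reaches_of_palindrome hreach (hblock m (by omega)) hw hu
      (by linear_combination -(n : ℤ) * hmZ) (by nlinarith) (by nlinarith)) huw
  · exact heq
  · obtain ⟨m, hm⟩ : ∃ m, 2 * a = k + 3 + m := ⟨2 * a - k - 3, by omega⟩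
    have hmZ : (2 * a : ℤ) = k + 3 + m := by exact_mod_cast hm
    have hmk : (m : ℤ) + 1 ≤ k := by omega
    exact absurd (hv_occ.eq_of_reaches_of_palindrome hreach (hblock m (by omega)) hw hv
      (by linear_combination -(n : ℤ) * hmZ) (by nlinarith) (by nlinarith)) hvw
end

section
/- Let w be a word and suppose T[i..(i + 2|w| - 1)] = w^2 and T[i..(i + r|w| - 1)] = w^r for some r ≥ 2, and let 2^λ divide |w|. Write i = 2^λ · j + 1 + Δ with Δ ∈ [0, 2^λ). Then |w| is a period of T[(2^λ·j + 2^λ + 1)..(2^λ·j + 2^λ + (r-1)|w|)]. Conversely, if |w| is a period of T[(2^λ·j + 2^λ + 1)..(2^λ·j + 2^λ + α|w|)] and T[i..(i+2|w|-1)] = w^2, then T[i..(i + α|w| - 1)] = w^α. -/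
/-- Translation between repetitions of `w` starting at `i = 2^λ·j + 1 + Δ` and periodicity
of the aligned fragment starting at `2^λ·j + 2^λ + 1`. -/
theorem stmt8 {α : Type*} [Inhabited α] (T : ℤ → α) (w : List α) (lam : ℕ) (i j Δ : ℤ)
    (hdvd : (2 ^ lam : ℤ) ∣ (w.length : ℤ)) (hlam : (2 ^ lam : ℤ) ≤ (w.length : ℤ))
    (hi : i = 2 ^ lam * j + 1 + Δ) (hΔ0 : 0 ≤ Δ) (hΔ : Δ < 2 ^ lam) :
    (∀ r : ℕ, 2 ≤ r →
      (∀ m : ℕ, m < r → ∀ t : ℕ, t < w.length →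
        T (i + (m * w.length : ℕ) + (t : ℤ)) = w.getD t default) →
      ∀ x : ℤ, 2 ^ lam * j + 2 ^ lam + 1 ≤ x →
        x + (w.length : ℤ) ≤ 2 ^ lam * j + 2 ^ lam + ((r - 1) * w.length : ℕ) →
        T x = T (x + (w.length : ℤ))) ∧
    (∀ a : ℕ,
      (∀ x : ℤ, 2 ^ lam * j + 2 ^ lam + 1 ≤ x →
        x + (w.length : ℤ) ≤ 2 ^ lam * j + 2 ^ lam + (a * w.length : ℕ) →
        T x = T (x + (w.length : ℤ))) →
      (∀ m : ℕ, m < 2 → ∀ t : ℕ, t < w.length →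
        T (i + (m * w.length : ℕ) + (t : ℤ)) = w.getD t default) →
      ∀ m : ℕ, m < a → ∀ t : ℕ, t < w.length →
        T (i + (m * w.length : ℕ) + (t : ℤ)) = w.getD t default) := by
  have hP1 : (1 : ℤ) ≤ 2 ^ lam := one_le_pow₀ (by norm_num)
  have hL1 : (1 : ℤ) ≤ (w.length : ℤ) := le_trans hP1 hlam
  have hlen : 0 < w.length := by exact_mod_cast lt_of_lt_of_le one_pos hL1
  set L : ℤ := (w.length : ℤ) with hLdef
  constructor
  · intro r hr hrep x hx1 hx2
    have hk0 : (0 : ℤ) ≤ x - i := by omega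
    set k : ℕ := (x - i).toNat with hkdef
    have hk : (k : ℤ) = x - i := Int.toNat_of_nonneg hk0
    have hkub : k < (r - 1) * w.length := by
      have hc : (((r - 1) * w.length : ℕ) : ℤ) = ((r : ℤ) - 1) * L := by
        push_cast [Nat.cast_sub (by omega : 1 ≤ r)]; ring
      have : (k : ℤ) < ((r - 1) * w.length : ℕ) := by rw [hc]; omega
      exact_mod_cast this
    set m : ℕ := k / w.length with hmdef
    set t : ℕ := k % w.length with htdef
    have ht : t < w.length := Nat.mod_lt _ hlen
    have hm : m + 1 < r := by
      have : m < r - 1 := Nat.div_lt_of_lt_mul (by rw [mul_comm]; exact hkub)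
      omega
    have hdm : m * w.length + t = k := by rw [mul_comm]; exact Nat.div_add_mod k w.length
    have hdm' : ((m * w.length : ℕ) : ℤ) + (t : ℤ) = (k : ℤ) := by exact_mod_cast hdm
    have e1 := hrep m (by omega) t ht
    have e2 := hrep (m + 1) hm t ht
    have hx : x = i + ((m * w.length : ℕ) : ℤ) + (t : ℤ) := by omega
    have hx' : x + L = i + (((m + 1) * w.length : ℕ) : ℤ) + (t : ℤ) := by
      have : (((m + 1) * w.length : ℕ) : ℤ) = ((m * w.length : ℕ) : ℤ) + L := by
        push_cast; ring
      omega
    rw [hx', e2, hx, e1]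
  · intro a hper h2 m
    induction m using Nat.strong_induction_on with
    | _ m ih =>
      intro hma t ht
      by_cases hm2 : m < 2
      · exact h2 m hm2 t ht
      · have hm1 : 1 ≤ m := by omega
        have hc : (((m - 1) * w.length : ℕ) : ℤ) = ((m : ℤ) - 1) * L := by
          push_cast [Nat.cast_sub hm1]; ring
        have hc2 : ((m * w.length : ℕ) : ℤ) = (m : ℤ) * L := by push_cast; ring
        have e : i + ((m * w.length : ℕ) : ℤ) + (t : ℤ)
            = (i + (((m - 1) * w.length : ℕ) : ℤ) + (t : ℤ)) + L := by
          rw [hc, hc2]; ring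
        have hm2' : (2 : ℤ) ≤ (m : ℤ) := by exact_mod_cast (by omega : 2 ≤ m)
        have hma' : (m : ℤ) + 1 ≤ (a : ℤ) := by exact_mod_cast (by omega : m + 1 ≤ a)
        have ht' : (t : ℤ) < L := by rw [hLdef]; exact_mod_cast ht
        have hca : ((a * w.length : ℕ) : ℤ) = (a : ℤ) * L := by push_cast; ring
        have hlow : 2 ^ lam * j + 2 ^ lam + 1 ≤ i + (((m - 1) * w.length : ℕ) : ℤ) + (t : ℤ) := by
          rw [hc]
          have : 1 * L ≤ ((m : ℤ) - 1) * L :=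
            mul_le_mul_of_nonneg_right (by omega) (by omega)
          omega
        have hhigh : (i + (((m - 1) * w.length : ℕ) : ℤ) + (t : ℤ)) + L
            ≤ 2 ^ lam * j + 2 ^ lam + ((a * w.length : ℕ) : ℤ) := by
          rw [hc, hca]
          have : ((m : ℤ) + 1) * L ≤ (a : ℤ) * L :=
            mul_le_mul_of_nonneg_right hma' (by omega)
          nlinarith
        have := hper (i + (((m - 1) * w.length : ℕ) : ℤ) + (t : ℤ)) hlow hhigh
        rw [e, ← this]
        exact ih (m - 1) (by omega) (by omega) t ht
end

section
/- For every d ≥ 1, the longest palindromic factor of the prefix ν(d) of the infinite word ν = 0^1 1^1 0^2 1^2 0^3 1^3 ... has length O(√d); more precisely, any palindromic factor of ν(d) has length at most c·√d for an absolute constant c. -/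
/-- The prefix of length `d` of the infinite word `ν = 0^1 1^1 0^2 1^2 0^3 1^3 …`. -/
def nuPref (d : ℕ) : List Bool :=
  (((List.range d).map fun i =>
      List.replicate (i + 1) false ++ List.replicate (i + 1) true).flatten).take d

/-!
The letter of `ν` changes exactly at the quarter-squares `⌊(j + 2)² / 4⌋ = 1, 2, 4, 6, 9, 12, …`,
whose consecutive gaps `1, 2, 2, 3, 3, …` never decrease and grow by one every two steps.
Reflection in the centre of a palindromic factor maps the change points inside it to change
points inside it, reversing their order, so the gaps next to the centre would have to be
symmetric; this fails as soon as the factor contains two change points on each side of its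
centre. Near position `d` the gaps are at most `√d + 1`, so a palindromic factor of `ν(d)` has
length at most `4√d + 5`.
-/

-- The ones of `ν` fill the intervals `[k², k² + k)`.
def nu (n : ℕ) : Bool := decide (n < Nat.sqrt n ^ 2 + Nat.sqrt n)

lemma nu_eq_decide {k n : ℕ} (hlo : k ^ 2 ≤ n) (hhi : n < (k + 1) ^ 2) :
    nu n = decide (n < k ^ 2 + k) := by
  have hk : Nat.sqrt n = k := le_antisymm (Nat.lt_succ_iff.mp (Nat.sqrt_lt'.mpr hhi))
    (Nat.le_sqrt'.mpr hlo)
  rw [nu, hk]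

lemma map_nu_range'_eq_block (k : ℕ) :
    (List.range' (k * (k + 1)) (2 * (k + 1))).map nu =
      List.replicate (k + 1) false ++ List.replicate (k + 1) true := by
  refine List.ext_getElem (by simp; ring) fun i hi _ => ?_
  simp only [List.length_map, List.length_range'] at hi
  rw [List.getElem_map, List.getElem_range', List.getElem_append, one_mul]
  split_ifs with h
  · simp only [List.length_replicate] at h
    rw [List.getElem_replicate, nu_eq_decide (k := k) (by nlinarith) (by nlinarith)]
    simp only [decide_eq_false_iff_not, not_lt]
    nlinarith
  · simp only [List.length_replicate, not_lt] at h
    rw [List.getElem_replicate, nu_eq_decide (k := k + 1) (by nlinarith) (by nlinarith)]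
    simp only [decide_eq_true_eq]
    nlinarith

lemma flatten_blocks_eq_map_nu (N : ℕ) :
    ((List.range N).map fun i =>
      List.replicate (i + 1) false ++ List.replicate (i + 1) true).flatten =
      (List.range (N * (N + 1))).map nu := by
  induction N with
  | zero => simp
  | succ N ih =>
    rw [List.range_succ, List.map_append, List.flatten_append, ih, List.map_singleton,
      List.flatten_singleton, ← map_nu_range'_eq_block, show (N + 1) * (N + 1 + 1) =
      N * (N + 1) + 2 * (N + 1) by ring, List.range_add, ← List.range'_eq_map_range,
      List.map_append]

lemma nuPref_eq_map_nu (d : ℕ) : nuPref d = (List.range d).map nu := by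
  rw [nuPref, flatten_blocks_eq_map_nu, ← List.map_take, List.take_range,
    min_eq_left (Nat.le_mul_of_pos_right d d.succ_pos)]

def changePt (j : ℕ) : ℕ := (j + 2) ^ 2 / 4

lemma changePt_two_mul (m : ℕ) : changePt (2 * m) = (m + 1) ^ 2 := by
  rw [changePt, show (2 * m + 2) ^ 2 = 4 * (m + 1) ^ 2 by ring]
  omega

lemma changePt_two_mul_add_one (m : ℕ) : changePt (2 * m + 1) = (m + 1) ^ 2 + (m + 1) := by
  rw [changePt, show (2 * m + 1 + 2) ^ 2 = 4 * ((m + 1) ^ 2 + (m + 1)) + 1 by ring]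
  omega

lemma changePt_succ (j : ℕ) : changePt (j + 1) = changePt j + (j + 3) / 2 := by
  rcases Nat.even_or_odd' j with ⟨m, rfl | rfl⟩
  · rw [changePt_two_mul_add_one, changePt_two_mul]
    omega
  · rw [show 2 * m + 1 + 1 = 2 * (m + 1) by ring, changePt_two_mul_add_one, changePt_two_mul,
      show (m + 1 + 1) ^ 2 = (m + 1) ^ 2 + 2 * (m + 1) + 1 by ring]
    omega

lemma changePt_strictMono : StrictMono changePt :=
  strictMono_nat_of_lt_succ fun j => by rw [changePt_succ]; omega

lemma lt_changePt (j : ℕ) : j < changePt j := by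
  rw [changePt, Nat.lt_iff_add_one_le, Nat.le_div_iff_mul_le four_pos]
  nlinarith

lemma changePt_one : changePt 1 = 2 := rfl

lemma changePt_succ_le (j : ℕ) : changePt (j + 1) ≤ changePt j + Nat.sqrt (changePt j) + 1 := by
  have hsq : (j + 1) / 2 ≤ Nat.sqrt (changePt j) := by
    rw [Nat.le_sqrt', changePt, Nat.le_div_iff_mul_le four_pos]
    have h := Nat.div_mul_le_self (j + 1) 2
    nlinarith [Nat.mul_le_mul h h]
  rw [changePt_succ]
  omega

lemma nu_ne_nu_succ_iff (n : ℕ) : nu n ≠ nu (n + 1) ↔ ∃ j, changePt j = n + 1 := by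
  have hsq (m : ℕ) : (m + 1) ^ 2 = m ^ 2 + 2 * m + 1 := by ring
  constructor
  · intro hne
    obtain ⟨k, hlo, hhi⟩ : ∃ k, k ^ 2 ≤ n ∧ n < (k + 1) ^ 2 :=
      ⟨_, Nat.sqrt_le' n, Nat.lt_succ_sqrt' n⟩
    rcases (show n + 1 ≤ (k + 1) ^ 2 by omega).lt_or_eq with hlt | heq
    · rw [nu_eq_decide hlo hhi, nu_eq_decide (by omega) hlt, ne_eq, decide_eq_decide] at hne
      cases k with
      | zero => omega
      | succ m => exact ⟨2 * m + 1, by rw [changePt_two_mul_add_one]; omega⟩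
    · exact ⟨2 * k, by rw [changePt_two_mul, heq]⟩
  · rintro ⟨j, hj⟩
    rcases Nat.even_or_odd' j with ⟨m, rfl | rfl⟩
    · rw [changePt_two_mul] at hj
      have := hsq m; have := hsq (m + 1)
      rw [nu_eq_decide (k := m) (by omega) (by omega),
        nu_eq_decide (k := m + 1) (by omega) (by omega), ne_eq, decide_eq_decide]
      omega
    · rw [changePt_two_mul_add_one] at hj
      have := hsq (m + 1)
      rw [nu_eq_decide (k := m + 1) (by omega) (by omega),
        nu_eq_decide (k := m + 1) (by omega) (by omega), ne_eq, decide_eq_decide]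
      omega

def PalindromicOn {α : Type*} (f : ℕ → α) (p L : ℕ) : Prop :=
  ∀ i < L, f (p + i) = f (p + (L - 1 - i))

namespace PalindromicOn

variable {p L : ℕ}

lemma exists_reflected_changePt (h : PalindromicOn nu p L) {j : ℕ} (hp : p < changePt j)
    (hL : changePt j < p + L) : ∃ j', j' ≠ j ∧ changePt j + changePt j' = 2 * p + L := by
  obtain ⟨i, hi⟩ : ∃ i, changePt j = p + i + 1 := ⟨changePt j - p - 1, by omega⟩
  have hne : nu (p + i) ≠ nu (p + i + 1) := (nu_ne_nu_succ_iff _).2 ⟨j, hi⟩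
  have hne' : nu (p + (L - 1 - (i + 1))) ≠ nu (p + (L - 1 - (i + 1)) + 1) := by
    rwa [h i (by omega), add_assoc, h (i + 1) (by omega), ne_comm,
      show p + (L - 1 - i) = p + (L - 1 - (i + 1)) + 1 by omega] at hne
  obtain ⟨j', hj'⟩ := (nu_ne_nu_succ_iff _).1 hne'
  refine ⟨j', ?_, by omega⟩
  rintro rfl
  rw [h i (by omega), show p + (L - 1 - i) = p + i + 1 by omega] at hne
  exact hne rfl

/-- The centre of the window lies in `[changePt (i + 1), changePt (i + 2))`, so reflection pairs
`changePt (i + 1)` with `changePt (i + 2)` and `changePt i` with `changePt (i + 3)`: the gaps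
after `changePt i` and after `changePt (i + 2)` would be equal. -/
lemma changePt_le_left (h : PalindromicOn nu p L) {i : ℕ} (hL : changePt (i + 2) < p + L)
    (hlo : 2 * changePt (i + 1) ≤ 2 * p + L) (hhi : 2 * p + L < 2 * changePt (i + 2)) :
    changePt i ≤ p := by
  by_contra! hp
  have hmono := changePt_strictMono
  have h01 : changePt i < changePt (i + 1) := hmono (by omega)
  have h12 : changePt (i + 1) < changePt (i + 2) := hmono (by omega)
  obtain ⟨j₂, -, hj₂⟩ := h.exists_reflected_changePt (j := i + 2) (by omega) hL
  have hle₂ : changePt j₂ ≤ changePt (i + 1) :=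
    hmono.monotone (Nat.lt_add_one_iff.mp (hmono.lt_iff_lt.mp
      (show changePt j₂ < changePt (i + 2) by omega)))
  obtain ⟨j₁, hj₁ne, hj₁⟩ := h.exists_reflected_changePt (j := i + 1) (by omega) (by omega)
  have hle₁ : changePt (i + 2) ≤ changePt j₁ :=
    hmono.monotone (lt_of_le_of_ne (hmono.le_iff_le.mp (by omega)) hj₁ne.symm)
  obtain ⟨j₀, -, hj₀⟩ := h.exists_reflected_changePt (j := i) hp (by omega)
  have hle₀ : changePt (i + 3) ≤ changePt j₀ := hmono.monotone (hmono.lt_iff_lt.mp (by omega))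
  have hgap₀ : changePt (i + 1) = changePt i + (i + 3) / 2 := changePt_succ i
  have hgap₂ : changePt (i + 3) = changePt (i + 2) + (i + 5) / 2 := changePt_succ (i + 2)
  omega

lemma length_le (h : PalindromicOn nu p L) {d : ℕ} (hd : p + L ≤ d) :
    L ≤ 4 * Nat.sqrt d + 5 := by
  by_contra! hL
  have hex : ∃ j, 2 * p + L < 2 * changePt j :=
    ⟨2 * p + L, by have := lt_changePt (2 * p + L); omega⟩
  obtain ⟨i, hi⟩ : ∃ i, Nat.find hex = i + 2 := by
    refine ⟨Nat.find hex - 2, (Nat.sub_add_cancel (not_lt.mp fun hlt => ?_)).symm⟩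
    have := Nat.find_spec hex
    have : changePt (Nat.find hex) ≤ changePt 1 := changePt_strictMono.monotone (by omega)
    rw [changePt_one] at this
    omega
  have hhi : 2 * p + L < 2 * changePt (i + 2) := hi ▸ Nat.find_spec hex
  have hlo : 2 * changePt (i + 1) ≤ 2 * p + L := not_lt.mp (Nat.find_min hex (by omega))
  have hgap {k : ℕ} (hk : changePt k ≤ d) : changePt (k + 1) ≤ changePt k + Nat.sqrt d + 1 :=
    (changePt_succ_le k).trans (by gcongr)
  have hgap₁ : changePt (i + 2) ≤ changePt (i + 1) + Nat.sqrt d + 1 := hgap (by omega)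
  have hgap₀ : changePt (i + 1) ≤ changePt i + Nat.sqrt d + 1 :=
    hgap ((changePt_strictMono.monotone (by omega : i ≤ i + 1)).trans (by omega))
  have := h.changePt_le_left (by omega) hlo hhi
  omega

end PalindromicOn

lemma palindromicOn_of_map_range_eq_append {α : Type*} {f : ℕ → α} {d : ℕ}
    {s mid t : List α} (heq : (List.range d).map f = s ++ mid ++ t) (hmid : mid.reverse = mid) :
    s.length + mid.length ≤ d ∧ PalindromicOn f s.length mid.length := by
  rw [List.append_assoc] at heq
  have hlen : s.length + mid.length ≤ d := by
    have := congrArg List.length heq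
    simp only [List.length_map, List.length_range, List.length_append] at this
    omega
  have hget (i : ℕ) (hi : i < mid.length) : f (s.length + i) = mid[i] := by
    have := List.getElem_of_eq heq (i := s.length + i) (by simp; omega)
    rw [List.getElem_map, List.getElem_range] at this
    rw [this, List.getElem_append_right (by omega)]
    simp only [Nat.add_sub_cancel_left, List.getElem_append_left hi]
  refine ⟨hlen, fun i hi => ?_⟩
  have hrev := List.getElem_of_eq hmid (i := i) (by simpa using hi)
  rw [List.getElem_reverse] at hrev
  rw [hget i hi, hget _ (by omega), hrev]

/-- Every palindromic factor of `ν(d)` has length at most `C·√d` for an absolute constant `C`. -/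
theorem stmt9 : ∃ C : ℝ, 0 < C ∧ ∀ d : ℕ, 1 ≤ d →
    ∀ s mid t : List Bool, nuPref d = s ++ mid ++ t → mid.reverse = mid →
      (mid.length : ℝ) ≤ C * Real.sqrt d := by
  refine ⟨9, by norm_num, fun d hd s mid t heq hmid => ?_⟩
  rw [nuPref_eq_map_nu] at heq
  obtain ⟨hlen, hpal⟩ := palindromicOn_of_map_range_eq_append heq hmid
  have hL : (mid.length : ℝ) ≤ 4 * Nat.sqrt d + 5 := by exact_mod_cast hpal.length_le hlen
  have hsqrt : (Nat.sqrt d : ℝ) ≤ Real.sqrt d := Real.nat_sqrt_le_real_sqrt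
  have hone : 1 ≤ Real.sqrt d := Real.one_le_sqrt.mpr (by exact_mod_cast hd)
  linarith
end

section
/- For the word w(x) = x[1..n'] · 1 · 0^n · 1 · x[(n'+1)..n] built from a word x of length n = 2n' over the alphabet {2,3,...} (not containing 0 or 1), the radius of the longest even palindrome in w(x) equals n' + k + 1, where k is the radius of the middle palindrome of x (the largest k such that x[(n'-k+1)..n'] equals the reversal of x[(n'+1)..(n'+k)]). -/
/-- `r` is a valid even-palindrome radius at center `c` (gap before 0-based index `c`) of `T`. -/
def evenPalRad (T : List ℕ) (c r : ℕ) : Prop :=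
  r ≤ c ∧ c + r ≤ T.length ∧
  ∀ i : ℕ, 1 ≤ i → i ≤ r → T.getD (c - i) 0 = T.getD (c + i - 1) 0

lemma getT_eq (n' : ℕ) (x : List ℕ) (hx : x.length = 2 * n') (j : ℕ) :
    (x.take n' ++ [1] ++ List.replicate (2 * n') 0 ++ [1] ++ x.drop n').getD j 0 =
    if j < n' then x.getD j 0
    else if j = n' then 1
    else if j ≤ 3 * n' then 0
    else if j = 3 * n' + 1 then 1
    else if j ≤ 4 * n' + 1 then x.getD (j - (2 * n' + 2)) 0
    else 0 := by
  have l1 : (x.take n').length = n' := by simp [hx]; omega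
  have l2 : (x.take n' ++ [1]).length = n' + 1 := by simp [l1]
  have l3 : (x.take n' ++ [1] ++ List.replicate (2 * n') 0).length = 3 * n' + 1 := by
    simp [List.length_append, l1]; omega
  have l4 : (x.take n' ++ [1] ++ List.replicate (2 * n') 0 ++ [1]).length = 3 * n' + 2 := by
    simp [List.length_append, l1]; omega
  have l5 : (x.drop n').length = n' := by simp [hx]; omega
  by_cases h1 : j < n'
  · rw [List.getD_append _ _ _ _ (by omega : j < _), List.getD_append _ _ _ _ (by omega : j < _),
      List.getD_append _ _ _ _ (by omega : j < _), List.getD_append _ _ _ _ (by omega : j < _)]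
    rw [if_pos h1]
    simp [List.getD_eq_getElem?_getD, List.getElem?_take, h1]
  by_cases h2 : j = n'
  · rw [List.getD_append _ _ _ _ (by omega : j < _), List.getD_append _ _ _ _ (by omega : j < _),
      List.getD_append _ _ _ _ (by omega : j < _),
      List.getD_append_right _ _ _ _ (by omega : (x.take n').length ≤ j)]
    rw [if_neg h1, if_pos h2, l1, h2]
    simp
  by_cases h3 : j ≤ 3 * n'
  · rw [List.getD_append _ _ _ _ (by omega : j < _), List.getD_append _ _ _ _ (by omega : j < _),
      List.getD_append_right _ _ _ _ (by omega : (x.take n' ++ [1]).length ≤ j)]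
    simp only [if_neg h1, if_neg h2, if_pos h3]
    simp [List.getD_eq_getElem?_getD]
  by_cases h4 : j = 3 * n' + 1
  · rw [List.getD_append _ _ _ _ (by omega : j < _),
      List.getD_append_right _ _ _ _
        (by omega : (x.take n' ++ [1] ++ List.replicate (2 * n') 0).length ≤ j)]
    simp only [if_neg h1, if_neg h2, if_neg h3, if_pos h4]
    rw [l3, h4]
    simp
  by_cases h5 : j ≤ 4 * n' + 1
  · rw [List.getD_append_right _ _ _ _
        (by omega : (x.take n' ++ [1] ++ List.replicate (2 * n') 0 ++ [1]).length ≤ j)]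
    simp only [if_neg h1, if_neg h2, if_neg h3, if_neg h4, if_pos h5]
    rw [l4]
    simp only [List.getD_eq_getElem?_getD, List.getElem?_drop]
    congr 2
    omega
  · rw [List.getD_eq_default _ _ (by simp [List.length_append, l1, l5]; omega)]
    simp only [if_neg h1, if_neg h2, if_neg h3, if_neg h4, if_neg h5]

set_option maxHeartbeats 1600000 in
/-- For `w(x) = x[1..n'] · 1 · 0^n · 1 · x[(n'+1)..n]` with `n = 2n'` and `x` over an
alphabet avoiding `0,1`, the radius of the longest even palindrome of `w(x)` equals
`n' + k + 1`, where `k` is the middle-palindrome radius of `x`. -/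
theorem stmt10 (n' k : ℕ) (x : List ℕ) (hx : x.length = 2 * n')
    (halph : ∀ a ∈ x, 2 ≤ a)
    (hk1 : ∀ i : ℕ, 1 ≤ i → i ≤ k → x.getD (n' - i) 0 = x.getD (n' + i - 1) 0)
    (hk2 : k ≤ n')
    (hk3 : k = n' ∨
      ¬ ∀ i : ℕ, 1 ≤ i → i ≤ k + 1 → x.getD (n' - i) 0 = x.getD (n' + i - 1) 0) :
    (∃ c, evenPalRad
        (x.take n' ++ [1] ++ List.replicate (2 * n') 0 ++ [1] ++ x.drop n') c (n' + k + 1)) ∧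
    (∀ c r, evenPalRad
        (x.take n' ++ [1] ++ List.replicate (2 * n') 0 ++ [1] ++ x.drop n') c r →
      r ≤ n' + k + 1) := by
  have hTlen : (x.take n' ++ [1] ++ List.replicate (2 * n') 0 ++ [1] ++ x.drop n').length
      = 4 * n' + 2 := by
    simp [List.length_append, hx]; omega
  constructor
  · refine ⟨2 * n' + 1, by omega, by omega, ?_⟩
    intro i hi1 hi2
    rw [getT_eq n' x hx, getT_eq n' x hx]
    split_ifs <;> try omega
    · -- both in x: i = n' + 1 + j with 1 ≤ j ≤ k
      rw [show 2 * n' + 1 - i = n' - (i - (n' + 1)) from by omega,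
        show 2 * n' + 1 + i - 1 - (2 * n' + 2) = n' + (i - (n' + 1)) - 1 from by omega]
      exact hk1 _ (by omega) (by omega)
  · rintro c r ⟨h1, h2, h3⟩
    rw [hTlen] at h2
    by_contra hbig
    push_neg at hbig
    have hr : n' + k + 2 ≤ r := hbig
    have hc : c = 2 * n' + 1 := by
      by_contra hcn
      rcases Nat.lt_or_ge c (2 * n' + 1) with hlt | hge
      · have spec := h3 (c - n') (by omega) (by omega)
        rw [getT_eq n' x hx, getT_eq n' x hx] at spec
        split_ifs at spec <;> omega
      · have spec := h3 (3 * n' + 2 - c) (by omega) (by omega)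
        rw [getT_eq n' x hx, getT_eq n' x hx] at spec
        split_ifs at spec <;> omega
    subst hc
    have hk' : k < n' := by omega
    rcases hk3 with h | h
    · omega
    push_neg at h
    obtain ⟨i0, hi01, hi02, hne⟩ := h
    have hi0 : i0 = k + 1 := by
      by_contra hne'
      exact hne (hk1 i0 hi01 (by omega))
    subst hi0
    have spec := h3 (n' + k + 2) (by omega) (by omega)
    rw [getT_eq n' x hx, getT_eq n' x hx] at spec
    split_ifs at spec <;> try omega
    apply hne
    rw [show n' - (k + 1) = 2 * n' + 1 - (n' + k + 2) from by omega,
      show n' + (k + 1) - 1 = 2 * n' + 1 + (n' + k + 2) - 1 - (2 * n' + 2) from by omega]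
    exact spec
end

section
/- Consider sequences (c_ℓ)_{ℓ=0}^{M} with c_ℓ ∈ {3,4,5} for ℓ < M and c_M ∈ {1,...,5}, satisfying the invariant: whenever c_i = 5 there exists j < i with c_j = 3 and c_{j+1} = ... = c_{i-1} = 4. Then the following update preserves validity: increment c_0 by one; if c_0 becomes 5, decrease c_0 by 2 and increase c_1 by 1; otherwise, if c_0 = 4 and there is an i ≥ 1 with c_1 = ... = c_{i-1} = 4 and c_i = 5, decrease c_i by 2 and increase c_{i+1} by 1. The resulting sequence again satisfies the invariant (possibly with M increased by one). -/
/-- Validity of the counts sequence of the recursive-slow-down partition scheme: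
`c_ℓ ∈ {3,4,5}` for `ℓ < M`, `c_M ∈ {1,…,5}`, and whenever `c_i = 5` there is a `j < i`
with `c_j = 3` and `c_{j+1} = … = c_{i-1} = 4`. -/
def ValidSeq (c : ℕ → ℕ) (M : ℕ) : Prop :=
  (∀ l, l < M → 3 ≤ c l ∧ c l ≤ 5) ∧ (1 ≤ c M ∧ c M ≤ 5) ∧
  (∀ l, M < l → c l = 0) ∧
  ∀ i, i ≤ M → c i = 5 → ∃ j, j < i ∧ c j = 3 ∧ ∀ t, j < t → t < i → c t = 4

/-- One update step (increment `c_0`; if it would reach `5`, merge at level `0`;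
otherwise if `c_0 = 4` and `c_1 = … = c_{i-1} = 4`, `c_i = 5`, merge at level `i`)
preserves validity. -/
theorem stmt14 (c : ℕ → ℕ) (M : ℕ) (hvalid : ValidSeq c M) :
    (c 0 = 4 →
      ValidSeq (Function.update (Function.update c 0 3) 1 (c 1 + 1)) (max M 1)) ∧
    (c 0 = 3 → ∀ i, 1 ≤ i → c i = 5 → (∀ t, 1 ≤ t → t < i → c t = 4) →
      ValidSeq
        (Function.update (Function.update (Function.update c 0 4) i 3) (i + 1) (c (i + 1) + 1))
        (max M (i + 1))) ∧
    (c 0 = 3 → (¬ ∃ i, 1 ≤ i ∧ c i = 5 ∧ ∀ t, 1 ≤ t → t < i → c t = 4) →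
      ValidSeq (Function.update c 0 4) M) := by
  obtain ⟨hb, hM, hz, hinv⟩ := hvalid
  refine ⟨?_, ?_, ?_⟩
  · -- case c 0 = 4
    intro h0
    set d := Function.update (Function.update c 0 3) 1 (c 1 + 1) with hd
    have hd0 : d 0 = 3 := by
      rw [hd, Function.update_of_ne (by omega), Function.update_self]
    have hd1 : d 1 = c 1 + 1 := by rw [hd, Function.update_self]
    have hdl : ∀ l, 2 ≤ l → d l = c l := by
      intro l hl
      rw [hd, Function.update_of_ne (by omega), Function.update_of_ne (by omega)]
    have hc1 : 1 ≤ M → c 1 ≠ 5 := by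
      intro h1 h5
      obtain ⟨j, hj, hj3, -⟩ := hinv 1 h1 h5
      have hje : j = 0 := by omega
      rw [hje] at hj3
      omega
    refine ⟨?_, ?_, ?_, ?_⟩
    · intro l hl
      match l, hl with
      | 0, _ => rw [hd0]; omega
      | 1, hl =>
        have hM2 : 2 ≤ M := by omega
        have := hb 1 (by omega)
        have := hc1 (by omega)
        rw [hd1]; omega
      | (n+2), hl =>
        rw [hdl _ (by omega)]
        exact hb _ (by omega)
    · rcases Nat.lt_or_ge M 2 with h | h
      · have hm : max M 1 = 1 := by omega
        rw [hm, hd1]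
        rcases Nat.eq_zero_or_pos M with h0' | h0'
        · have := hz 1 (by omega); omega
        · have hM1 : M = 1 := by omega
          have := hc1 (by omega)
          rw [hM1] at hM
          omega
      · have hm : max M 1 = M := by omega
        rw [hm, hdl _ (by omega)]
        exact hM
    · intro l hl
      rw [hdl _ (by omega)]
      exact hz _ (by omega)
    · intro i hi h5
      match i with
      | 0 => omega
      | 1 => exact ⟨0, by omega, hd0, fun t ht1 ht2 => by omega⟩
      | (n+2) =>
        rw [hdl _ (by omega)] at h5
        have hiM : n + 2 ≤ M := by
          by_contra h
          have := hz (n+2) (by omega); omega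
        obtain ⟨j, hj, hj3, hj4⟩ := hinv _ hiM h5
        have hj1 : 1 ≤ j := by
          rcases Nat.eq_zero_or_pos j with h | h
          · rw [h] at hj3; omega
          · exact h
        rcases Nat.lt_or_ge j 2 with h | h
        · -- j = 1
          have hje : j = 1 := by omega
          refine ⟨0, by omega, hd0, fun t ht1 ht2 => ?_⟩
          match t with
          | 0 => omega
          | 1 => rw [hd1]; rw [hje] at hj3; omega
          | (m+2) => rw [hdl _ (by omega)]; exact hj4 _ (by omega) ht2
        · refine ⟨j, hj, by rw [hdl _ h]; exact hj3, fun t ht1 ht2 => ?_⟩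
          rw [hdl _ (by omega)]
          exact hj4 _ ht1 ht2
  · -- case c 0 = 3, merge at level i
    intro h0 i hi1 hi5 hall
    set d := Function.update (Function.update (Function.update c 0 4) i 3) (i + 1)
      (c (i + 1) + 1) with hd
    have hiM : i ≤ M := by
      by_contra h
      have := hz i (by omega); omega
    have hd0 : d 0 = 4 := by
      rw [hd, Function.update_of_ne (by omega), Function.update_of_ne (by omega),
        Function.update_self]
    have hdi : d i = 3 := by
      rw [hd, Function.update_of_ne (by omega), Function.update_self]
    have hdi1 : d (i+1) = c (i+1) + 1 := by rw [hd, Function.update_self]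
    have hdo : ∀ l, l ≠ 0 → l ≠ i → l ≠ i + 1 → d l = c l := by
      intro l h1 h2 h3
      rw [hd, Function.update_of_ne h3, Function.update_of_ne h2, Function.update_of_ne h1]
    have hci1 : i + 1 ≤ M → c (i+1) ≠ 5 := by
      intro hle h5
      obtain ⟨j, hj, hj3, hj4⟩ := hinv (i+1) hle h5
      rcases Nat.lt_or_ge j i with h | h
      · have := hj4 i h (by omega); omega
      · have : j = i := by omega
        rw [this] at hj3; omega
    refine ⟨?_, ?_, ?_, ?_⟩
    · intro l hl
      rcases Nat.eq_zero_or_pos l with h | h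
      · rw [h, hd0]; omega
      rcases eq_or_ne l i with h2 | h2
      · rw [h2, hdi]; omega
      rcases eq_or_ne l (i+1) with h3 | h3
      · rw [h3, hdi1]
        have hlt : i + 1 < M := by omega
        have := hb (i+1) hlt
        have := hci1 (by omega)
        omega
      · rw [hdo l (by omega) h2 h3]
        exact hb l (by omega)
    · rcases Nat.lt_or_ge M (i+1) with h | h
      · -- M = i, new max is i+1
        have hMi : M = i := by omega
        have hm : max M (i+1) = i + 1 := by omega
        rw [hm, hdi1]
        have := hz (i+1) (by omega)
        omega
      · have hm : max M (i+1) = M := by omega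
        rw [hm]
        rcases eq_or_ne M (i+1) with h2 | h2
        · rw [h2, hdi1]
          have := hci1 (by omega)
          rw [h2] at hM
          omega
        · rw [hdo M (by omega) (by omega) h2]
          exact hM
    · intro l hl
      rw [hdo l (by omega) (by omega) (by omega)]
      exact hz l (by omega)
    · intro k hk h5
      rcases eq_or_ne k (i+1) with hk1 | hk1
      · -- d (i+1) = 5 means c (i+1) = 4, witness i
        refine ⟨i, by omega, hdi, fun t ht1 ht2 => by omega⟩
      have hk0 : k ≠ 0 := by intro h; rw [h, hd0] at h5; omega
      have hki : k ≠ i := by intro h; rw [h, hdi] at h5; omega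
      rw [hdo k hk0 hki hk1] at h5
      have hkM : k ≤ M := by
        by_contra h
        have := hz k (by omega); omega
      -- k > i + 1 necessarily
      have hkgt : i + 1 < k := by
        rcases Nat.lt_or_ge k i with h | h
        · have := hall k (by omega) h; omega
        · omega
      obtain ⟨j, hj, hj3, hj4⟩ := hinv k hkM h5
      have hjgt : i + 1 ≤ j := by
        by_contra h
        rcases Nat.lt_or_ge j i with h2 | h2
        · have := hj4 i (by omega) (by omega); omega
        · have : j = i := by omega
          rw [this] at hj3; omega
      rcases eq_or_ne j (i+1) with hje | hje
      · -- witness becomes i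
        refine ⟨i, by omega, hdi, fun t ht1 ht2 => ?_⟩
        rcases eq_or_ne t (i+1) with ht | ht
        · rw [ht, hdi1]; rw [hje] at hj3; omega
        · rw [hdo t (by omega) (by omega) ht]
          exact hj4 t (by omega) ht2
      · refine ⟨j, hj, ?_, fun t ht1 ht2 => ?_⟩
        · rw [hdo j (by omega) (by omega) hje]; exact hj3
        · rw [hdo t (by omega) (by omega) (by omega)]
          exact hj4 t ht1 ht2
  · -- case c 0 = 3, no merge
    intro h0 hno
    set d := Function.update c 0 4 with hd
    have hd0 : d 0 = 4 := by rw [hd, Function.update_self]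
    have hdo : ∀ l, l ≠ 0 → d l = c l := by
      intro l h1; rw [hd, Function.update_of_ne h1]
    refine ⟨?_, ?_, ?_, ?_⟩
    · intro l hl
      rcases Nat.eq_zero_or_pos l with h | h
      · rw [h, hd0]; omega
      · rw [hdo l (by omega)]; exact hb l hl
    · rcases Nat.eq_zero_or_pos M with h | h
      · rw [h, hd0]; omega
      · rw [hdo M (by omega)]; exact hM
    · intro l hl
      rw [hdo l (by omega)]; exact hz l hl
    · intro k hk h5
      have hk0 : k ≠ 0 := by intro h; rw [h, hd0] at h5; omega
      rw [hdo k hk0] at h5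
      obtain ⟨j, hj, hj3, hj4⟩ := hinv k hk h5
      have hj0 : j ≠ 0 := by
        intro h
        rw [h] at hj hj4
        exact hno ⟨k, by omega, h5, fun t ht1 ht2 => hj4 t (by omega) ht2⟩
      refine ⟨j, hj, by rw [hdo j hj0]; exact hj3, fun t ht1 ht2 => ?_⟩
      rw [hdo t (by omega)]
      exact hj4 t ht1 ht2
end
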